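/- arXiv:2406.03561 — 10 statements merged into one kernel-verified Lean document; each statement's English description precedes it below -/
import Mathlib

section
/- Let G be a simple undirected graph with adjacency matrix A, and let |A| denote the positive semidefinite square root of A². Define the energy of a vertex i as E(i) = |A|_{ii}. If (i,j) is an edge of G, then E(i)·E(j) ≥ 1. -/
open Finset Matrix

noncomputable section

variable {V : Type*} [Fintype V] [DecidableEq V]

/-- The adjacency matrix of a simple graph is Hermitian (over ℝ). -/
theorem SimpleGraph.isHermitian_adjMatrix' (G : SimpleGraph V) [DecidableRel G.Adj] :
    (G.adjMatrix ℝ).IsHermitian := by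
  rw [Matrix.IsHermitian, Matrix.conjTranspose_eq_transpose_of_trivial]
  exact G.isSymm_adjMatrix

/-- The energy of a graph: the sum of the absolute values of the
eigenvalues of its adjacency matrix. -/
def SimpleGraph.energy (G : SimpleGraph V) [DecidableRel G.Adj] : ℝ :=
  ∑ k, |G.isHermitian_adjMatrix'.eigenvalues k|

/-- The Randić index of a graph: the sum over the (unordered) edges `(i,j)`
of `1/√(deg i · deg j)`. -/
def SimpleGraph.randic (G : SimpleGraph V) [DecidableRel G.Adj] : ℝ :=
  ∑ e ∈ G.edgeFinset,
    Sym2.lift ⟨fun i j => 1 / Real.sqrt (G.degree i * G.degree j),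
      fun i j => by simp [mul_comm]⟩ e

end

open scoped MatrixOrder

/-! By uniqueness of positive square roots, `B = |A|`. Since `|A| ± A = 2 A^±` are positive
semidefinite, so are their `{i, j}` principal minors, and `A i j = ((|A| + A) i j - (|A| - A) i j) / 2`
is then bounded by Cauchy–Schwarz: `(A i j)² ≤ |A| i i * |A| j j`. On an edge `A i j = 1`. -/

theorem sub_sq_le_add_mul_add {a b x₁ x₂ y₁ y₂ : ℝ} (hx₁ : 0 ≤ x₁) (hx₂ : 0 ≤ x₂)
    (hy₁ : 0 ≤ y₁) (hy₂ : 0 ≤ y₂) (ha : a ^ 2 ≤ x₁ * x₂) (hb : b ^ 2 ≤ y₁ * y₂) :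
    (a - b) ^ 2 ≤ (x₁ + y₁) * (x₂ + y₂) := by
  have hab : (a * b) ^ 2 ≤ ((x₁ * y₂ + x₂ * y₁) / 2) ^ 2 := by
    nlinarith [sq_nonneg (x₁ * y₂ - x₂ * y₁), mul_le_mul ha hb (sq_nonneg b) (by positivity)]
  have habs := abs_le_of_sq_le_sq' hab (by positivity)
  nlinarith

theorem Matrix.PosSemidef.apply_sq_le {n : Type*} [Fintype n] {P : Matrix n n ℝ}
    (hP : P.PosSemidef) (i j : n) : P i j ^ 2 ≤ P i i * P j j := by
  have hdet := (hP.submatrix ![i, j]).det_nonneg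
  have hsymm : P j i = P i j := hP.isHermitian.apply i j
  simp only [det_fin_two, submatrix_apply, cons_val_zero, cons_val_one,
    hsymm] at hdet
  nlinarith

theorem Matrix.sq_apply_le_abs_apply_mul_abs_apply {n : Type*} [Fintype n] [DecidableEq n]
    {A : Matrix n n ℝ} (hA : IsSelfAdjoint A) (i j : n) :
    A i j ^ 2 ≤ CFC.abs A i i * CFC.abs A j j := by
  have hplus : (CFC.abs A + A).PosSemidef := by
    rw [← nonneg_iff_posSemidef, CFC.abs_add_self A]
    exact smul_nonneg zero_le_two (CFC.posPart_nonneg A)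
  have hminus : (CFC.abs A - A).PosSemidef := by
    rw [← nonneg_iff_posSemidef, CFC.abs_sub_self A]
    exact smul_nonneg zero_le_two (CFC.negPart_nonneg A)
  have key := sub_sq_le_add_mul_add (hplus.diag_nonneg (i := i)) (hplus.diag_nonneg (i := j))
    (hminus.diag_nonneg (i := i)) (hminus.diag_nonneg (i := j))
    (hplus.apply_sq_le i j) (hminus.apply_sq_le i j)
  simp only [add_apply, sub_apply] at key
  linarith

/-- If `B` is the positive semidefinite square root of `A²` (with `A` the adjacency
matrix of `G`), and the vertex energy is `E(i) = B i i`, then `E(i)·E(j) ≥ 1` for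
every edge `(i,j)` of `G`. -/
theorem stmt0 {V : Type*} [Fintype V] [DecidableEq V]
    (G : SimpleGraph V) [DecidableRel G.Adj]
    (B : Matrix V V ℝ) (hB : B.PosSemidef)
    (hB2 : B * B = G.adjMatrix ℝ * G.adjMatrix ℝ)
    {i j : V} (hij : G.Adj i j) :
    1 ≤ B i i * B j j := by
  have hA : IsSelfAdjoint (G.adjMatrix ℝ) := G.isHermitian_adjMatrix'
  have hB_abs : CFC.abs (G.adjMatrix ℝ) = B :=
    CFC.sqrt_unique (by rw [hA.star_eq, hB2]) (nonneg_iff_posSemidef.mpr hB)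
  simpa [hB_abs, hij] using sq_apply_le_abs_apply_mul_abs_apply hA i j
end

section
/- Let G be a graph with vertex energies E(i) and energy E(G) = Σ_i E(i). Suppose for each vertex i and each neighbor j of i a weight p_i^j ∈ [0,1] is given with Σ_{j ∈ N(i)} p_i^j = 1. Then E(G) ≥ 2 Σ_{(i,j) ∈ E(G)} √(p_i^j · p_j^i). -/
open Finset Matrix

lemma two_mul_sqrt_mul_le_of_one_le_mul {a b x y : ℝ} (ha : 0 ≤ a) (hb : 0 ≤ b)
    (hx : 0 ≤ x) (hy : 0 ≤ y) (hxy : 1 ≤ x * y) : 2 * √(a * b) ≤ a * x + b * y := by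
  have hab : √(a * b) ≤ √(a * x) * √(b * y) := by
    rw [← Real.sqrt_mul (mul_nonneg ha hx)]
    exact Real.sqrt_le_sqrt (by nlinarith [mul_nonneg ha hb])
  nlinarith [two_mul_le_add_sq (√(a * x)) (√(b * y)), Real.sq_sqrt (mul_nonneg ha hx),
    Real.sq_sqrt (mul_nonneg hb hy)]

namespace Matrix.IsHermitian

variable {n : Type*} [Fintype n] [DecidableEq n] {A : Matrix n n ℝ} (hA : A.IsHermitian)

/-- `(|A|)ᵢᵢ`, where `|A| = ∑ₖ |λₖ| uₖ uₖᵀ`. -/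
noncomputable def absDiag (i : n) : ℝ :=
  ∑ k, |hA.eigenvalues k| * hA.eigenvectorBasis k i ^ 2

theorem absDiag_nonneg (i : n) : 0 ≤ hA.absDiag i :=
  sum_nonneg fun _ _ => by positivity

theorem sum_eigenvectorBasis_sq (k : n) : ∑ i, hA.eigenvectorBasis k i ^ 2 = 1 := by
  have h : ‖hA.eigenvectorBasis k‖ ^ 2 = 1 := by rw [hA.eigenvectorBasis.orthonormal.1 k, one_pow]
  rw [EuclideanSpace.norm_sq_eq] at h
  simpa using h

theorem sum_absDiag : ∑ i, hA.absDiag i = ∑ k, |hA.eigenvalues k| := by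
  unfold absDiag
  rw [sum_comm]
  simp_rw [← mul_sum, sum_eigenvectorBasis_sq, mul_one]

theorem apply_eq_sum_eigenvalues_mul (i j : n) :
    A i j = ∑ k, hA.eigenvalues k * (hA.eigenvectorBasis k i * hA.eigenvectorBasis k j) := by
  conv_lhs => rw [hA.spectral_theorem, Unitary.conjStarAlgAut_apply]
  rw [mul_apply]
  refine sum_congr rfl fun k _ => ?_
  simp only [RCLike.ofReal_real_eq_id, CompTriple.comp_eq, mul_diagonal, eigenvectorUnitary_apply,
    star_apply, star_trivial]
  ring

theorem sq_apply_le_absDiag_mul_absDiag (i j : n) : A i j ^ 2 ≤ hA.absDiag i * hA.absDiag j := by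
  have habs : |A i j| ≤
      ∑ k, |hA.eigenvalues k| * (|hA.eigenvectorBasis k i| * |hA.eigenvectorBasis k j|) := by
    rw [hA.apply_eq_sum_eigenvalues_mul]
    refine (abs_sum_le_sum_abs _ _).trans_eq (sum_congr rfl fun k _ => ?_)
    simp only [abs_mul]
  calc A i j ^ 2 = |A i j| ^ 2 := (sq_abs _).symm
    _ ≤ (∑ k, |hA.eigenvalues k| * (|hA.eigenvectorBasis k i| * |hA.eigenvectorBasis k j|)) ^ 2 :=
      by gcongr
    _ ≤ hA.absDiag i * hA.absDiag j :=
      sum_sq_le_sum_mul_sum_of_sq_le_mul _ (fun _ _ => by positivity) (fun _ _ => by positivity)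
        fun k _ => le_of_eq (by ring_nf; simp only [sq_abs])

end Matrix.IsHermitian

namespace SimpleGraph

variable {V M : Type*} [Fintype V] [AddCommMonoid M] (G : SimpleGraph V) [DecidableRel G.Adj]

theorem sum_darts_symm (f : V → V → M) :
    ∑ d : G.Dart, f d.snd d.fst = ∑ d : G.Dart, f d.fst d.snd :=
  Fintype.sum_bijective Dart.symm Dart.symm_involutive.bijective _ _ fun _ => rfl

variable [DecidableEq V]

theorem sum_darts_eq_two_nsmul_sum_edgeFinset (f : V → V → M) (hf : ∀ i j, f i j = f j i) :
    ∑ d : G.Dart, f d.fst d.snd = 2 • ∑ e ∈ G.edgeFinset, Sym2.lift ⟨f, hf⟩ e := by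
  rw [← sum_fiberwise_of_maps_to (g := Dart.edge) fun d _ => mem_edgeFinset.2 d.edge_mem,
    smul_sum]
  refine sum_congr rfl fun e he => ?_
  induction e with
  | _ v w =>
    let d : G.Dart := ⟨(v, w), mem_edgeFinset.1 he⟩
    rw [show ({d' : G.Dart | d'.edge = s(v, w)} : Finset _) = {d, d.symm} from d.edge_fiber,
      sum_pair d.symm_ne.symm, two_nsmul]
    simp [d, hf w v]

theorem sum_darts_eq_sum_neighborFinset (f : V → V → M) :
    ∑ d : G.Dart, f d.fst d.snd = ∑ i, ∑ j ∈ G.neighborFinset i, f i j := by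
  rw [← sum_fiberwise_of_maps_to (g := fun d : G.Dart => d.fst) fun d _ => mem_univ _]
  refine sum_congr rfl fun v _ => ?_
  rw [show ({d : G.Dart | d.fst = v} : Finset _) = univ.image (G.dartOfNeighborSet v) by
      simpa using G.dart_fst_fiber v,
    sum_image fun x _ y _ h => G.dartOfNeighborSet_injective v h]
  exact (sum_subtype _ (fun _ => mem_neighborFinset G v _) (f v)).symm

noncomputable def vertexEnergy (i : V) : ℝ := G.isHermitian_adjMatrix'.absDiag i

theorem vertexEnergy_nonneg (i : V) : 0 ≤ G.vertexEnergy i :=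
  G.isHermitian_adjMatrix'.absDiag_nonneg i

theorem sum_vertexEnergy : ∑ i, G.vertexEnergy i = G.energy :=
  G.isHermitian_adjMatrix'.sum_absDiag

theorem one_le_vertexEnergy_mul {i j : V} (h : G.Adj i j) :
    1 ≤ G.vertexEnergy i * G.vertexEnergy j := by
  simpa [vertexEnergy, adjMatrix_apply, h] using
    G.isHermitian_adjMatrix'.sq_apply_le_absDiag_mul_absDiag i j

end SimpleGraph

/-- If to every vertex `i` and every neighbour `j` of `i` a weight `p i j ∈ [0,1]` is
assigned, with the weights at each (non-isolated) vertex summing to `1`, then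
`E(G) ≥ 2 ∑_{(i,j) ∈ E(G)} √(p i j · p j i)`. -/
theorem stmt1 {V : Type*} [Fintype V] [DecidableEq V]
    (G : SimpleGraph V) [DecidableRel G.Adj]
    (p : V → V → ℝ)
    (hp0 : ∀ i j, G.Adj i j → 0 ≤ p i j)
    (hsum : ∀ i, (G.neighborFinset i).Nonempty →
      ∑ j ∈ G.neighborFinset i, p i j = 1) :
    2 * ∑ e ∈ G.edgeFinset,
        Sym2.lift ⟨fun i j => Real.sqrt (p i j * p j i),
          fun i j => by simp [mul_comm]⟩ e
      ≤ G.energy := by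
  calc _ = ∑ d : G.Dart, √(p d.fst d.snd * p d.snd d.fst) := by
        rw [G.sum_darts_eq_two_nsmul_sum_edgeFinset (fun i j => √(p i j * p j i))
          fun i j => by simp [mul_comm], nsmul_eq_mul, Nat.cast_ofNat]
    _ ≤ ∑ d : G.Dart,
          (p d.fst d.snd * G.vertexEnergy d.fst + p d.snd d.fst * G.vertexEnergy d.snd) / 2 := by
        gcongr with d
        have := two_mul_sqrt_mul_le_of_one_le_mul (hp0 _ _ d.adj) (hp0 _ _ d.adj.symm)
          (G.vertexEnergy_nonneg _) (G.vertexEnergy_nonneg _) (G.one_le_vertexEnergy_mul d.adj)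
        linarith
    _ = ∑ d : G.Dart, p d.fst d.snd * G.vertexEnergy d.fst := by
        rw [← sum_div, sum_add_distrib, G.sum_darts_symm fun i j => p j i * G.vertexEnergy j]
        ring
    _ = ∑ i, (∑ j ∈ G.neighborFinset i, p i j) * G.vertexEnergy i := by
        rw [G.sum_darts_eq_sum_neighborFinset fun i j => p i j * G.vertexEnergy i]
        simp_rw [sum_mul]
    _ ≤ ∑ i, G.vertexEnergy i := sum_le_sum fun i _ => by
        rcases (G.neighborFinset i).eq_empty_or_nonempty with h | h
        · simp [h, G.vertexEnergy_nonneg]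
        · rw [hsum i h, one_mul]
    _ = G.energy := G.sum_vertexEnergy
end

section
/- For any simple graph G, the graph energy satisfies E(G) ≥ 2R(G), where R(G) = Σ_{(i,j) ∈ E(G)} 1/√(deg(i)·deg(j)) is the Randić index. -/
open Finset Matrix

/-!
With `D` the degree matrix and `N = D^{-1/2} A D^{-1/2}` the normalized adjacency matrix, each
edge contributes `2 / √(deg i · deg j)` to `tr (A N)`, so `tr (A N) = 2 R(G)`. Expanding `A` in an
orthonormal eigenbasis `v_k` gives `tr (A N) = ∑ λ_k ⟨v_k, N v_k⟩`, and `|⟨x, N x⟩| ≤ ‖x‖²`: with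
`z = D^{-1/2} x`, `|⟨x, N x⟩| ≤ ⟨|z|, A |z|⟩ ≤ ⟨|z|, D |z|⟩ ≤ ‖x‖²`, the middle step being
positive semidefiniteness of the Laplacian `D - A`. Hence `2 R(G) ≤ ∑ |λ_k| = E(G)`.
-/

namespace Matrix

variable {m n R : Type*} [Fintype m] [Fintype n]

lemma abs_dotProduct_mulVec_le_of_nonneg [CommRing R] [LinearOrder R] [IsStrictOrderedRing R]
    {M : Matrix m n R} (hM : ∀ i j, 0 ≤ M i j) (x : m → R) (y : n → R) :
    |x ⬝ᵥ M *ᵥ y| ≤ |x| ⬝ᵥ M *ᵥ |y| := by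
  simp only [dotProduct, mulVec, Pi.abs_apply]
  refine (abs_sum_le_sum_abs _ _).trans (sum_le_sum fun i _ ↦ ?_)
  rw [abs_mul]
  gcongr
  refine (abs_sum_le_sum_abs _ _).trans_eq (sum_congr rfl fun j _ ↦ ?_)
  rw [abs_mul, abs_of_nonneg (hM i j)]

variable [DecidableEq n]

lemma IsHermitian.trace_mul_eq_sum_eigenvalues_mul {𝕜 : Type*} [RCLike 𝕜] {A : Matrix n n 𝕜}
    (hA : A.IsHermitian) (B : Matrix n n 𝕜) :
    trace (A * B) = ∑ k, (hA.eigenvalues k : 𝕜) *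
      (star ⇑(hA.eigenvectorBasis k) ⬝ᵥ B *ᵥ ⇑(hA.eigenvectorBasis k)) := by
  conv_lhs => rw [hA.spectral_theorem, Unitary.conjStarAlgAut_apply]
  rw [Matrix.mul_assoc, trace_mul_cycle, trace]
  refine sum_congr rfl fun k _ ↦ ?_
  rw [diag_apply, mul_diagonal, mul_comm, Function.comp_apply]
  congr 1
  simp only [Matrix.mul_apply, dotProduct, mulVec, star_apply, Pi.star_apply, mul_sum, sum_mul,
    eigenvectorUnitary_apply, mul_assoc]
  exact sum_comm

lemma IsHermitian.trace_mul_le_sum_abs_eigenvalues {A B : Matrix n n ℝ} (hA : A.IsHermitian)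
    (hB : ∀ x : n → ℝ, |x ⬝ᵥ B *ᵥ x| ≤ x ⬝ᵥ x) :
    trace (A * B) ≤ ∑ k, |hA.eigenvalues k| := by
  rw [hA.trace_mul_eq_sum_eigenvalues_mul]
  refine sum_le_sum fun k _ ↦ ?_
  set v := hA.eigenvectorBasis k
  have hv : ⇑v ⬝ᵥ ⇑v = 1 := by
    have h := real_inner_self_eq_norm_sq v
    rwa [hA.eigenvectorBasis.orthonormal.1 k, one_pow, EuclideanSpace.inner_eq_star_dotProduct,
      star_trivial] at h
  calc hA.eigenvalues k * (star ⇑v ⬝ᵥ B *ᵥ ⇑v)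
      ≤ |hA.eigenvalues k| * |⇑v ⬝ᵥ B *ᵥ ⇑v| := (le_abs_self _).trans (abs_mul _ _).le
    _ ≤ |hA.eigenvalues k| := mul_le_of_le_one_right (abs_nonneg _) (hv ▸ hB v)

end Matrix

namespace SimpleGraph

variable {V : Type*} [Fintype V] (G : SimpleGraph V) [DecidableRel G.Adj]

lemma sum_darts_eq_sum_adj {M : Type*} [AddCommMonoid M] (f : V → V → M) :
    ∑ d : G.Dart, f d.fst d.snd = ∑ i, ∑ j, if G.Adj i j then f i j else 0 := by
  rw [← Fintype.sum_prod_type', ← sum_filter]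
  exact sum_bij' (fun d _ ↦ (d.fst, d.snd)) (fun p hp ↦ ⟨p, (mem_filter.1 hp).2⟩)
    (by simp) (by simp) (by simp) (by simp) (by simp)

variable [DecidableEq V]

lemma sum_darts_edge {M : Type*} [AddCommMonoid M] (f : Sym2 V → M) :
    ∑ d : G.Dart, f d.edge = 2 • ∑ e ∈ G.edgeFinset, f e := by
  rw [← sum_fiberwise_of_maps_to (g := Dart.edge) (t := G.edgeFinset)
    (fun d _ ↦ G.mem_edgeFinset.2 d.edge_mem), smul_sum]
  refine sum_congr rfl fun e he ↦ ?_
  rw [sum_congr rfl fun d hd ↦ congrArg f (mem_filter.1 hd).2, sum_const,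
    G.dart_edge_fiber_card e (G.mem_edgeFinset.1 he)]

lemma two_mul_randic :
    2 * G.randic = ∑ i, ∑ j, if G.Adj i j then 1 / √(G.degree i * G.degree j) else 0 := by
  rw [← G.sum_darts_eq_sum_adj, randic, two_mul, ← two_nsmul, ← sum_darts_edge]
  rfl

lemma dotProduct_mulVec_adjMatrix_le_degMatrix (x : V → ℝ) :
    x ⬝ᵥ G.adjMatrix ℝ *ᵥ x ≤ x ⬝ᵥ G.degMatrix ℝ *ᵥ x := by
  have := (G.posSemidef_lapMatrix ℝ).dotProduct_mulVec_nonneg x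
  rwa [star_trivial, lapMatrix, sub_mulVec, dotProduct_sub, sub_nonneg] at this

/-- `D^{-1/2}`, where `(√0)⁻¹ = 0` gives isolated vertices a zero row and column in
`normAdjMatrix`. -/
noncomputable def invSqrtDegMatrix : Matrix V V ℝ :=
  diagonal fun i ↦ (√(G.degree i))⁻¹

noncomputable def normAdjMatrix : Matrix V V ℝ :=
  G.invSqrtDegMatrix * G.adjMatrix ℝ * G.invSqrtDegMatrix

lemma normAdjMatrix_apply (i j : V) :
    G.normAdjMatrix i j = (√(G.degree i))⁻¹ * G.adjMatrix ℝ i j * (√(G.degree j))⁻¹ := by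
  rw [normAdjMatrix, invSqrtDegMatrix, mul_diagonal, diagonal_mul]

lemma dotProduct_mulVec_normAdjMatrix (x : V → ℝ) :
    x ⬝ᵥ G.normAdjMatrix *ᵥ x =
      (G.invSqrtDegMatrix *ᵥ x) ⬝ᵥ G.adjMatrix ℝ *ᵥ (G.invSqrtDegMatrix *ᵥ x) := by
  rw [normAdjMatrix, ← mulVec_mulVec, ← mulVec_mulVec, dotProduct_mulVec, ← mulVec_transpose,
    invSqrtDegMatrix, diagonal_transpose]

lemma abs_dotProduct_mulVec_normAdjMatrix_le (x : V → ℝ) :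
    |x ⬝ᵥ G.normAdjMatrix *ᵥ x| ≤ x ⬝ᵥ x := by
  set z := G.invSqrtDegMatrix *ᵥ x with hz
  have hdeg : ∀ i, (G.degree i : ℝ) * (√(G.degree i))⁻¹ ^ 2 ≤ 1 := fun i ↦ by
    rw [inv_pow, Real.sq_sqrt (Nat.cast_nonneg _)]
    exact mul_inv_le_one
  calc |x ⬝ᵥ G.normAdjMatrix *ᵥ x| = |z ⬝ᵥ G.adjMatrix ℝ *ᵥ z| := by
        rw [dotProduct_mulVec_normAdjMatrix]
    _ ≤ |z| ⬝ᵥ G.adjMatrix ℝ *ᵥ |z| :=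
        abs_dotProduct_mulVec_le_of_nonneg (fun i j ↦ by by_cases h : G.Adj i j <;> simp [h]) z z
    _ ≤ |z| ⬝ᵥ G.degMatrix ℝ *ᵥ |z| := G.dotProduct_mulVec_adjMatrix_le_degMatrix _
    _ = ∑ i, (G.degree i : ℝ) * (√(G.degree i))⁻¹ ^ 2 * (x i * x i) := by
        rw [dotProduct_mulVec_degMatrix]
        refine sum_congr rfl fun i _ ↦ ?_
        rw [Pi.abs_apply, mul_assoc, abs_mul_abs_self, hz, invSqrtDegMatrix, mulVec_diagonal]
        ring
    _ ≤ x ⬝ᵥ x := sum_le_sum fun i _ ↦ mul_le_of_le_one_left (mul_self_nonneg _) (hdeg i)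

lemma trace_adjMatrix_mul_normAdjMatrix :
    trace (G.adjMatrix ℝ * G.normAdjMatrix) = 2 * G.randic := by
  rw [two_mul_randic]
  simp only [trace, diag_apply, mul_apply, normAdjMatrix_apply]
  refine sum_congr rfl fun i _ ↦ sum_congr rfl fun j _ ↦ ?_
  by_cases h : G.Adj i j
  · simp [h, h.symm, Real.sqrt_mul, mul_comm]
  · simp [h]

end SimpleGraph

/-- For any simple graph `G`, the energy satisfies `E(G) ≥ 2 R(G)` where `R(G)`
is the Randić index. -/
theorem stmt3 {V : Type*} [Fintype V] [DecidableEq V]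
    (G : SimpleGraph V) [DecidableRel G.Adj] :
    2 * G.randic ≤ G.energy := by
  rw [← G.trace_adjMatrix_mul_normAdjMatrix, SimpleGraph.energy]
  exact G.isHermitian_adjMatrix'.trace_mul_le_sum_abs_eigenvalues
    G.abs_dotProduct_mulVec_normAdjMatrix_le
end

section
/- Let G be a simple connected graph on n vertices (n ≥ 1). Then E(G) ≥ 2√(n−1). -/
/-!
The adjacency eigenvalues `λₖ` of a graph with `m` edges satisfy `∑ λₖ = tr A = 0` and
`∑ λₖ² = tr A² = 2m`. For reals with zero sum, `(∑ |λₖ|)² = ∑ᵢⱼ (|λᵢ||λⱼ| + λᵢλⱼ)` is a sum of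
nonnegative terms whose diagonal part is `2 ∑ λₖ²`, so `E(G)² ≥ 4m`. A connected graph on `n`
vertices has `m ≥ n - 1`.
-/

open Finset Matrix

theorem Finset.two_mul_sum_sq_le_sq_sum_abs {ι : Type*} (s : Finset ι) (f : ι → ℝ)
    (hf : ∑ i ∈ s, f i = 0) : 2 * ∑ i ∈ s, f i ^ 2 ≤ (∑ i ∈ s, |f i|) ^ 2 := by
  have hterm (i j : ι) : 0 ≤ |f i| * |f j| + f i * f j := by
    have := neg_abs_le (f i * f j)
    rw [abs_mul] at this
    linarith
  calc 2 * ∑ i ∈ s, f i ^ 2 = ∑ i ∈ s, (|f i| * |f i| + f i * f i) := by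
        rw [mul_sum]; exact sum_congr rfl fun i _ => by rw [abs_mul_abs_self]; ring
    _ ≤ ∑ i ∈ s, ∑ j ∈ s, (|f i| * |f j| + f i * f j) :=
        sum_le_sum fun i hi => single_le_sum (fun j _ => hterm i j) hi
    _ = (∑ i ∈ s, |f i|) ^ 2 + (∑ i ∈ s, f i) ^ 2 := by
        simp only [sq, sum_mul_sum, sum_add_distrib]
    _ = (∑ i ∈ s, |f i|) ^ 2 := by rw [hf]; ring

theorem Matrix.IsHermitian.trace_mul_self_eq_sum_eigenvalues_sq {𝕜 n : Type*} [RCLike 𝕜]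
    [Fintype n] [DecidableEq n] {A : Matrix n n 𝕜} (hA : A.IsHermitian) :
    (A * A).trace = ∑ i, (hA.eigenvalues i : 𝕜) ^ 2 := by
  conv_lhs => rw [hA.spectral_theorem, ← map_mul]
  rw [Unitary.conjStarAlgAut_apply, trace_mul_cycle, Unitary.coe_star_mul_self, one_mul]
  simp [diagonal_mul_diagonal, trace_diagonal, sq]

namespace SimpleGraph

variable {V : Type*} [Fintype V] [DecidableEq V] (G : SimpleGraph V) [DecidableRel G.Adj]

theorem sum_eigenvalues_adjMatrix : ∑ k, G.isHermitian_adjMatrix'.eigenvalues k = 0 := by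
  exact_mod_cast G.isHermitian_adjMatrix'.trace_eq_sum_eigenvalues.symm.trans
    (G.trace_adjMatrix ℝ)

theorem sum_eigenvalues_adjMatrix_sq :
    ∑ k, G.isHermitian_adjMatrix'.eigenvalues k ^ 2 = 2 * #G.edgeFinset := by
  have htrace : (G.adjMatrix ℝ * G.adjMatrix ℝ).trace = ∑ v, (G.degree v : ℝ) :=
    sum_congr rfl fun v _ => G.adjMatrix_mul_self_apply_self v
  have := G.isHermitian_adjMatrix'.trace_mul_self_eq_sum_eigenvalues_sq
  simp only [RCLike.ofReal_real_eq_id, id, htrace] at this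
  rw [← this]
  exact_mod_cast G.sum_degrees_eq_twice_card_edges

theorem two_mul_sqrt_card_edgeFinset_le_energy : 2 * √(#G.edgeFinset : ℝ) ≤ G.energy := by
  have hsq : 4 * (#G.edgeFinset : ℝ) ≤ G.energy ^ 2 := by
    have := Finset.two_mul_sum_sq_le_sq_sum_abs univ _ G.sum_eigenvalues_adjMatrix
    rw [sum_eigenvalues_adjMatrix_sq] at this
    unfold energy
    linarith
  have henergy : 0 ≤ G.energy := sum_nonneg fun _ _ => abs_nonneg _
  rw [← pow_le_pow_iff_left₀ (by positivity) henergy two_ne_zero, mul_pow,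
    Real.sq_sqrt (by positivity)]
  linarith

end SimpleGraph

theorem stmt5_general {n : ℕ}
    (G : SimpleGraph (Fin n)) [DecidableRel G.Adj] (hG : G.Connected) :
    2 * Real.sqrt ((n : ℝ) - 1) ≤ G.energy := by
  have hedges : (n : ℝ) - 1 ≤ #G.edgeFinset := by
    have := hG.card_vert_le_card_edgeSet_add_one
    rw [Nat.card_eq_fintype_card, Fintype.card_fin, Nat.card_eq_fintype_card,
      ← SimpleGraph.edgeFinset_card] at this
    rw [sub_le_iff_le_add]
    exact_mod_cast this
  calc 2 * √((n : ℝ) - 1) ≤ 2 * √(#G.edgeFinset : ℝ) := by gcongr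
    _ ≤ G.energy := G.two_mul_sqrt_card_edgeFinset_le_energy

/-- A simple connected graph on `n ≥ 1` vertices has energy at least `2√(n-1)`. -/
theorem stmt5 {n : ℕ} (hn : 1 ≤ n)
    (G : SimpleGraph (Fin n)) [DecidableRel G.Adj] (hG : G.Connected) :
    2 * Real.sqrt ((n : ℝ) - 1) ≤ G.energy :=
  stmt5_general G hG
end

section
/- If a graph G on n vertices has a {1,2}-factor (a spanning subgraph in which every vertex has degree 1 or 2 and each component is regular, i.e., a disjoint union of edges and cycles covering all vertices), then E(G) ≥ n. -/
open Finset Matrix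

/-- Quadratic-form bound: a symmetric entrywise-nonnegative matrix with unit row sums
has quadratic form bounded by the squared norm. -/
lemma quad_bound {n : ℕ} (M : Matrix (Fin n) (Fin n) ℝ) (hsym : ∀ i j, M i j = M j i)
    (hnn : ∀ i j, 0 ≤ M i j) (hrow : ∀ i, ∑ j, M i j = 1) (x : Fin n → ℝ) :
    |∑ i, ∑ j, M i j * x i * x j| ≤ ∑ i, x i ^ 2 := by
  have h1 : ∑ i, ∑ j, M i j * x i ^ 2 = ∑ i, x i ^ 2 := by
    refine Finset.sum_congr rfl fun i _ => ?_
    rw [← Finset.sum_mul, hrow i, one_mul]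
  have h2 : ∑ i, ∑ j, M i j * x j ^ 2 = ∑ i, x i ^ 2 := by
    rw [Finset.sum_comm]
    refine Finset.sum_congr rfl fun j _ => ?_
    have : ∑ i, M i j = 1 := by
      rw [← hrow j]; exact Finset.sum_congr rfl fun i _ => hsym i j
    rw [← Finset.sum_mul, this, one_mul]
  calc |∑ i, ∑ j, M i j * x i * x j|
      ≤ ∑ i, ∑ j, |M i j * x i * x j| :=
        (Finset.abs_sum_le_sum_abs _ _).trans
          (Finset.sum_le_sum fun i _ => Finset.abs_sum_le_sum_abs _ _)
    _ ≤ ∑ i, ∑ j, (M i j * x i ^ 2 / 2 + M i j * x j ^ 2 / 2) := by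
        refine Finset.sum_le_sum fun i _ => Finset.sum_le_sum fun j _ => ?_
        have habs : |M i j * x i * x j| = M i j * (|x i| * |x j|) := by
          rw [abs_mul, abs_mul, abs_of_nonneg (hnn i j), mul_assoc]
        rw [habs]
        have hx : |x i| * |x j| ≤ (x i ^ 2 + x j ^ 2) / 2 := by
          nlinarith [sq_nonneg (|x i| - |x j|), sq_abs (x i), sq_abs (x j)]
        nlinarith [hnn i j, mul_le_mul_of_nonneg_left hx (hnn i j)]
    _ = (∑ i, ∑ j, M i j * x i ^ 2) / 2 + (∑ i, ∑ j, M i j * x j ^ 2) / 2 := by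
        simp_rw [Finset.sum_add_distrib, ← Finset.sum_div]
    _ = ∑ i, x i ^ 2 := by rw [h1, h2]; ring

/-- If a graph `G` on `n` vertices has a `{1,2}`-factor — a spanning subgraph `H` in
which every vertex has degree `1` or `2` and every connected component is regular
(i.e. a disjoint union of single edges and cycles covering all vertices) — then
`E(G) ≥ n`. -/
theorem stmt7 {n : ℕ} (G H : SimpleGraph (Fin n))
    [DecidableRel G.Adj] [DecidableRel H.Adj]
    (hHG : H ≤ G)
    (hdeg : ∀ v, H.degree v = 1 ∨ H.degree v = 2)
    (hreg : ∀ u v : Fin n, H.Reachable u v → H.degree u = H.degree v) :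
    (n : ℝ) ≤ G.energy := by
  classical
  set A : Matrix (Fin n) (Fin n) ℝ := G.adjMatrix ℝ with hA_def
  have hA := G.isHermitian_adjMatrix'
  -- the weight matrix
  set M : Matrix (Fin n) (Fin n) ℝ :=
    fun i j => if H.Adj i j then ((H.degree i : ℝ))⁻¹ else 0 with hM_def
  have hdpos : ∀ i, (0 : ℝ) < (H.degree i : ℝ) := by
    intro i; rcases hdeg i with h | h <;> rw [h] <;> norm_num
  have hsym : ∀ i j, M i j = M j i := by
    intro i j
    by_cases h : H.Adj i j
    · have hd : H.degree i = H.degree j := hreg i j h.reachable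
      simp [hM_def, h, h.symm, hd]
    · have h' : ¬ H.Adj j i := fun hc => h hc.symm
      simp [hM_def, h, h']
  have hnn : ∀ i j, 0 ≤ M i j := by
    intro i j
    by_cases h : H.Adj i j
    · simp [hM_def, h]
    · simp [hM_def, h]
  have hrow : ∀ i, ∑ j, M i j = 1 := by
    intro i
    have : ∑ j, M i j = ∑ j ∈ H.neighborFinset i, ((H.degree i : ℝ))⁻¹ := by
      rw [SimpleGraph.neighborFinset_eq_filter, Finset.sum_filter]
    rw [this, Finset.sum_const, ← SimpleGraph.degree, nsmul_eq_mul]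
    exact mul_inv_cancel₀ (ne_of_gt (hdpos i))
  -- trace(A * M) = n
  have htrace : Matrix.trace (A * M) = (n : ℝ) := by
    have hentry : ∀ i j, A i j * M j i = M i j := by
      intro i j
      by_cases h : H.Adj i j
      · rw [hsym i j] at *
        have : A i j = 1 := by simp [hA_def, hHG h]
        rw [← hsym i j, this, one_mul, hsym i j]
      · have h' : ¬ H.Adj j i := fun hc => h hc.symm
        simp [hM_def, h, h']
    have : Matrix.trace (A * M) = ∑ i, ∑ j, A i j * M j i := by
      simp [Matrix.trace, Matrix.diag, Matrix.mul_apply]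
    rw [this]
    simp_rw [hentry]
    simp_rw [hrow]
    simp
  -- spectral decomposition
  set U : Matrix (Fin n) (Fin n) ℝ := (hA.eigenvectorUnitary : Matrix (Fin n) (Fin n) ℝ)
    with hU_def
  have hstar : star U * U = 1 :=
    (Unitary.mem_iff.mp hA.eigenvectorUnitary.2).1
  have hcol : ∀ k, ∑ i, (U i k) ^ 2 = 1 := by
    intro k
    have h1 : (star U * U) k k = 1 := by rw [hstar]; simp
    rw [Matrix.mul_apply] at h1
    simp only [Matrix.star_apply, star_trivial] at h1
    rw [← h1]
    exact Finset.sum_congr rfl fun i _ => by ring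
  set N : Matrix (Fin n) (Fin n) ℝ := star U * M * U with hN_def
  have hNkk : ∀ k, |N k k| ≤ 1 := by
    intro k
    have hNval : N k k = ∑ i, ∑ j, M i j * (U i k) * (U j k) := by
      rw [hN_def]
      simp only [Matrix.mul_apply, Matrix.star_apply, star_trivial, Finset.sum_mul]
      rw [Finset.sum_comm]
      exact Finset.sum_congr rfl fun i _ => Finset.sum_congr rfl fun j _ => by ring
    rw [hNval, ← hcol k]
    exact quad_bound M hsym hnn hrow (fun i => U i k)
  -- trace(A * M) = ∑ λ_k * N k k
  have hkey : Matrix.trace (A * M) = ∑ k, hA.eigenvalues k * N k k := by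
    have hspec : A = U * Matrix.diagonal (RCLike.ofReal ∘ hA.eigenvalues) * star U :=
      hA.spectral_theorem
    have hdiag : (RCLike.ofReal ∘ hA.eigenvalues : Fin n → ℝ) = hA.eigenvalues := by
      funext k; simp [RCLike.ofReal_real_eq_id]
    rw [hdiag] at hspec
    calc Matrix.trace (A * M)
        = Matrix.trace (U * (Matrix.diagonal hA.eigenvalues * (star U * M))) := by
          rw [hspec]; simp only [Matrix.mul_assoc]
      _ = Matrix.trace ((Matrix.diagonal hA.eigenvalues * (star U * M)) * U) :=
          Matrix.trace_mul_comm _ _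
      _ = Matrix.trace (Matrix.diagonal hA.eigenvalues * N) := by
          rw [hN_def]; simp only [Matrix.mul_assoc]
      _ = ∑ k, hA.eigenvalues k * N k k := by
          simp [Matrix.trace, Matrix.diag, Matrix.diagonal_mul]
  -- combine
  have : (n : ℝ) = ∑ k, hA.eigenvalues k * N k k := by rw [← hkey, htrace]
  rw [this, SimpleGraph.energy]
  calc ∑ k, hA.eigenvalues k * N k k
      ≤ ∑ k, |hA.eigenvalues k * N k k| :=
        Finset.sum_le_sum fun k _ => le_abs_self _
    _ ≤ ∑ k, |hA.eigenvalues k| := by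
        refine Finset.sum_le_sum fun k _ => ?_
        rw [abs_mul]
        calc |hA.eigenvalues k| * |N k k| ≤ |hA.eigenvalues k| * 1 :=
              mul_le_mul_of_nonneg_left (hNkk k) (abs_nonneg _)
          _ = |hA.eigenvalues k| := mul_one _
end

section
/- If a graph G on an odd number n of vertices has a Hamiltonian path, then E(G) ≥ √(n² − 1). -/
open Finset Matrix

noncomputable section Aux
variable {V : Type*} [Fintype V] [DecidableEq V] (G : SimpleGraph V) [DecidableRel G.Adj]

def myd (i : V) : ℝ :=
  ∑ k, |G.isHermitian_adjMatrix'.eigenvalues k| *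
    ((G.isHermitian_adjMatrix'.eigenvectorUnitary : Matrix V V ℝ) i k) ^ 2

lemma myd_nonneg (i : V) : 0 ≤ myd G i :=
  Finset.sum_nonneg fun _ _ => mul_nonneg (abs_nonneg _) (sq_nonneg _)

lemma col_norm (k : V) :
    ∑ i, ((G.isHermitian_adjMatrix'.eigenvectorUnitary : Matrix V V ℝ) i k) ^ 2 = 1 := by
  have h1 : star (G.isHermitian_adjMatrix'.eigenvectorUnitary : Matrix V V ℝ) *
      (G.isHermitian_adjMatrix'.eigenvectorUnitary : Matrix V V ℝ) = 1 :=
    Unitary.coe_star_mul_self G.isHermitian_adjMatrix'.eigenvectorUnitary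
  have h2 := congrArg (fun M => M k k) h1
  simp [Matrix.mul_apply, Matrix.star_apply, Matrix.one_apply, sq] at h2 ⊢
  exact h2

lemma sum_myd : ∑ i, myd G i = G.energy := by
  unfold myd SimpleGraph.energy
  rw [Finset.sum_comm]
  exact Finset.sum_congr rfl fun k _ => by rw [← Finset.mul_sum, col_norm, mul_one]

lemma entry_eq (i j : V) : (G.adjMatrix ℝ) i j =
    ∑ k, G.isHermitian_adjMatrix'.eigenvalues k *
      ((G.isHermitian_adjMatrix'.eigenvectorUnitary : Matrix V V ℝ) i k *
       (G.isHermitian_adjMatrix'.eigenvectorUnitary : Matrix V V ℝ) j k) := by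
  have h := congrArg (fun M => M i j) G.isHermitian_adjMatrix'.spectral_theorem
  simp [Matrix.mul_apply, Matrix.diagonal_apply, Matrix.star_apply] at h ⊢
  rw [h]
  exact Finset.sum_congr rfl fun k _ => by ring

lemma adj_le (i j : V) (h : G.Adj i j) : 1 ≤ myd G i * myd G j := by
  set hA := G.isHermitian_adjMatrix'
  set U : Matrix V V ℝ := (hA.eigenvectorUnitary : Matrix V V ℝ)
  have h1 : (1 : ℝ) = ∑ k, hA.eigenvalues k * (U i k * U j k) := by
    rw [← entry_eq]; simp [h]
  have h2 : (1:ℝ) ≤ ∑ k, (Real.sqrt |hA.eigenvalues k| * |U i k|) *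
      (Real.sqrt |hA.eigenvalues k| * |U j k|) := by
    rw [h1]
    refine Finset.sum_le_sum fun k _ => ?_
    have : Real.sqrt |hA.eigenvalues k| * Real.sqrt |hA.eigenvalues k| = |hA.eigenvalues k| :=
      Real.mul_self_sqrt (abs_nonneg _)
    calc hA.eigenvalues k * (U i k * U j k) ≤ |hA.eigenvalues k * (U i k * U j k)| := le_abs_self _
      _ = _ := by
            rw [abs_mul, abs_mul]
            linear_combination (-(|U i k| * |U j k|)) * this
  have h3 := Finset.sum_mul_sq_le_sq_mul_sq Finset.univ
    (fun k => Real.sqrt |hA.eigenvalues k| * |U i k|)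
    (fun k => Real.sqrt |hA.eigenvalues k| * |U j k|)
  have h4 : ∀ l : V, ∑ k, (Real.sqrt |hA.eigenvalues k| * |U l k|) ^ 2 = myd G l := by
    intro l
    refine Finset.sum_congr rfl fun k _ => ?_
    rw [mul_pow, Real.sq_sqrt (abs_nonneg _), sq_abs]
  rw [h4 i, h4 j] at h3
  nlinarith [h2, h3]

lemma amgm (a b x y : ℝ) (ha : 0 ≤ a) (hb : 0 ≤ b) (hx : 0 ≤ x) (hy : 0 ≤ y)
    (h : 1 ≤ x * y) : 2 * Real.sqrt (a * b) ≤ a * x + b * y := by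
  have hax : 0 ≤ a * x := mul_nonneg ha hx
  have hby : 0 ≤ b * y := mul_nonneg hb hy
  have h1 : Real.sqrt (a * b) ≤ Real.sqrt (a * x * (b * y)) := by
    apply Real.sqrt_le_sqrt
    nlinarith [mul_nonneg (mul_nonneg ha hb) (sub_nonneg.mpr h)]
  have h2 : Real.sqrt (a * x * (b * y)) = Real.sqrt (a * x) * Real.sqrt (b * y) :=
    Real.sqrt_mul hax _
  have h3 := two_mul_le_add_sq (Real.sqrt (a * x)) (Real.sqrt (b * y))
  rw [Real.sq_sqrt hax, Real.sq_sqrt hby] at h3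
  nlinarith [h1, h2, h3]

lemma sum_c (M : ℕ) (N : ℝ) :
    ∑ t ∈ Finset.range (2 * M), (if Even t then N - (t : ℝ) else (t : ℝ) + 1) = M * (N + 2) := by
  induction M with
  | zero => simp
  | succ k ih =>
    have h2 : 2 * (k + 1) = 2 * k + 1 + 1 := by ring
    rw [h2, Finset.sum_range_succ, Finset.sum_range_succ, ih]
    have h3 : ¬ Even (2 * k + 1) := by simp [parity_simps]
    have h4 : Even (2 * k) := even_two_mul k
    rw [if_neg h3, if_pos h4]
    push_cast
    ring

end Aux

/-- If a graph `G` on an odd number `n` of vertices has a Hamiltonian path, then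
`E(G) ≥ √(n² - 1)`. -/
theorem stmt12 {n : ℕ} (hn : Odd n)
    (G : SimpleGraph (Fin n)) [DecidableRel G.Adj]
    (u v : Fin n) (w : G.Walk u v) (hw : w.IsHamiltonian) :
    Real.sqrt ((n : ℝ) ^ 2 - 1) ≤ G.energy := by
  obtain ⟨m, rfl⟩ := hn
  have hE0 : (0:ℝ) ≤ G.energy := by
    rw [← sum_myd]
    exact Finset.sum_nonneg fun i _ => myd_nonneg G i
  rcases Nat.eq_zero_or_pos m with hm0 | hmpos
  · subst hm0
    have : ((2 * 0 + 1 : ℕ) : ℝ) ^ 2 - 1 = 0 := by norm_num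
    rw [this, Real.sqrt_zero]
    exact hE0
  -- main case
  have hm1 : (1 : ℝ) ≤ (m : ℝ) := by exact_mod_cast hmpos
  have hcast : ((2 * m + 1 : ℕ) : ℝ) = 2 * (m : ℝ) + 1 := by push_cast; ring
  rw [hcast]
  set s := Real.sqrt ((2 * (m : ℝ) + 1) ^ 2 - 1) with hs_def
  have harg : (2 * (m : ℝ) + 1) ^ 2 - 1 = 4 * (m:ℝ)^2 + 4 * m := by ring
  have hargpos : (0:ℝ) < (2 * (m : ℝ) + 1) ^ 2 - 1 := by nlinarith
  have hspos : 0 < s := Real.sqrt_pos.mpr hargpos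
  have hs2 : s ^ 2 = 4 * (m:ℝ)^2 + 4 * m := by rw [hs_def, Real.sq_sqrt hargpos.le, harg]
  -- walk data
  set D : ℕ → ℝ := fun t => myd G (w.getVert t) with hD_def
  have hlen : w.length = 2 * m := by
    have := hw.length_eq
    simpa using this
  have hD0 : ∀ t, 0 ≤ D t := fun t => myd_nonneg G _
  have hDadj : ∀ t, t < 2 * m → 1 ≤ D t * D (t + 1) := by
    intro t ht
    exact adj_le G _ _ (w.adj_getVert_succ (by omega : t < w.length))
  -- energy as sum over positions
  have hE : G.energy = ∑ t ∈ Finset.range (2 * m + 1), D t := by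
    have hσ : Function.Bijective (fun t : Fin (2*m+1) => w.getVert t) := by
      apply Function.Surjective.bijective_of_finite
      intro x
      have hx : x ∈ w.support := hw.mem_support x
      rw [SimpleGraph.Walk.mem_support_iff_exists_getVert] at hx
      obtain ⟨i, hiv, hile⟩ := hx
      exact ⟨⟨i, by omega⟩, hiv⟩
    rw [← sum_myd, ← hσ.sum_comp (fun i => myd G i)]
    exact Fin.sum_univ_eq_sum_range (fun t => D t) (2 * m + 1)
  -- weights
  set a : ℕ → ℝ := fun t =>
    if Even t then (2 * (m:ℝ) - t) / (2 * m) else ((t:ℝ) + 1) / (2 * m + 2) with ha_def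
  set b : ℕ → ℝ := fun t =>
    if Even t then (t:ℝ) / (2 * m) else (2 * (m:ℝ) + 1 - t) / (2 * m + 2) with hb_def
  set c : ℕ → ℝ := fun t => if Even t then 2 * (m:ℝ) - t else (t:ℝ) + 1 with hc_def
  have hmne : (2 * (m:ℝ)) ≠ 0 := by positivity
  have hmne2 : (2 * (m:ℝ) + 2) ≠ 0 := by positivity
  have hab : ∀ t, a t + b t = 1 := by
    intro t
    by_cases h : Even t <;> simp only [ha_def, hb_def, if_pos, if_neg, h, if_true, if_false] <;>
      field_simp <;> ring
  have hkey : ∀ t, a t * b (t + 1) = (c t / s) ^ 2 := by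
    intro t
    have hb' : ¬ Even (t+1) ↔ Even t := by simp [parity_simps]
    rw [div_pow, hs2]
    by_cases h : Even t
    · have h1 : ¬ Even (t + 1) := by simp [parity_simps, h]
      simp only [ha_def, hb_def, hc_def, if_pos h, if_neg h1]
      push_cast
      field_simp
      ring
    · have h1 : Even (t + 1) := by simp [parity_simps, h]
      simp only [ha_def, hb_def, hc_def, if_neg h, if_pos h1]
      push_cast
      field_simp
      ring
  have hc_nonneg : ∀ t, t < 2 * m → 0 ≤ c t := by
    intro t ht
    by_cases h : Even t <;> simp only [hc_def, if_pos, if_neg, h, if_true, if_false]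
    · have : (t : ℝ) ≤ 2 * m := by exact_mod_cast ht.le
      linarith
    · positivity
  have ha_nonneg : ∀ t, t < 2 * m + 1 → 0 ≤ a t := by
    intro t ht
    have htr : (t : ℝ) ≤ 2 * m := by exact_mod_cast Nat.lt_succ_iff.mp ht
    by_cases h : Even t <;> simp only [ha_def, if_pos, if_neg, h, if_true, if_false]
    · apply div_nonneg (by linarith) (by positivity)
    · positivity
  have hb_nonneg : ∀ t, t < 2 * m + 1 → 0 ≤ b t := by
    intro t ht
    have htr : (t : ℝ) ≤ 2 * m := by exact_mod_cast Nat.lt_succ_iff.mp ht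
    by_cases h : Even t <;> simp only [hb_def, if_pos, if_neg, h, if_true, if_false]
    · positivity
    · apply div_nonneg (by linarith) (by positivity)
  -- split the sum
  have hsplit : G.energy = ∑ t ∈ Finset.range (2 * m), (a t * D t + b (t+1) * D (t+1)) := by
    rw [hE]
    have e1 : ∑ t ∈ Finset.range (2 * m + 1), D t
        = ∑ t ∈ Finset.range (2 * m + 1), (a t * D t) +
          ∑ t ∈ Finset.range (2 * m + 1), (b t * D t) := by
      rw [← Finset.sum_add_distrib]
      exact Finset.sum_congr rfl fun t _ => by rw [← add_mul, hab, one_mul]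
    have ha2m : a (2 * m) = 0 := by
      simp only [ha_def, if_pos (even_two_mul m)]
      push_cast
      simp
    have hb0 : b 0 = 0 := by simp [hb_def]
    rw [e1, Finset.sum_range_succ, Finset.sum_range_succ', ha2m, hb0]
    simp only [zero_mul, add_zero]
    rw [← Finset.sum_add_distrib]
  -- pointwise bound
  have hpt : ∀ t ∈ Finset.range (2 * m), 2 * (c t / s) ≤ a t * D t + b (t+1) * D (t+1) := by
    intro t ht
    rw [Finset.mem_range] at ht
    have h1 := amgm (a t) (b (t+1)) (D t) (D (t+1)) (ha_nonneg t (by omega))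
      (hb_nonneg (t+1) (by omega)) (hD0 t) (hD0 (t+1)) (hDadj t ht)
    rwa [hkey t, Real.sqrt_sq (div_nonneg (hc_nonneg t ht) hspos.le)] at h1
  -- final computation
  have hsum : ∑ t ∈ Finset.range (2 * m), (2 * (c t / s)) = s := by
    have e2 : ∀ t, 2 * (c t / s) = (2 / s) * (if Even t then 2 * (m:ℝ) - t else (t:ℝ) + 1) := by
      intro t
      rw [hc_def]
      ring
    rw [Finset.sum_congr rfl fun t _ => e2 t, ← Finset.mul_sum]
    have e3 : ∑ t ∈ Finset.range (2 * m),
        (if Even t then 2 * (m:ℝ) - (t:ℝ) else (t:ℝ) + 1) = (m:ℝ) * (2 * m + 2) := by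
      have := sum_c m (2 * (m:ℝ))
      simpa using this
    rw [e3]
    have : (2 / s) * ((m:ℝ) * (2 * (m:ℝ) + 2)) = ((2 * (m : ℝ) + 1) ^ 2 - 1) / s := by
      field_simp
      ring
    rw [this, hs_def, Real.div_sqrt]
  calc s = ∑ t ∈ Finset.range (2 * m), (2 * (c t / s)) := hsum.symm
    _ ≤ ∑ t ∈ Finset.range (2 * m), (a t * D t + b (t+1) * D (t+1)) := Finset.sum_le_sum hpt
    _ = G.energy := hsplit.symm
end

section
/- Let P_n be the path on n vertices with n odd, n = 2k+1. With the weights p_i^{i+1} = (n−i)/(n−1) if i is odd and i/(n+1) if i is even, and p_i^{i−1} = (i−1)/(n−1) if i is odd and (n+1−i)/(n+1) if i is even, one has 2 Σ_{i=1}^{n−1} √(p_i^{i+1} · p_{i+1}^{i}) = √(n² − 1). -/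
open Finset Matrix

/-!
Each edge term is a geometric mean `√(x/(n-1) · x/(n+1)) = x/√(n²-1)`, with `x = n - i` on
odd edges and `x = i` on even ones. Consecutive edges `2j-1, 2j` then contribute
`(n - 2j + 1) + 2j = n + 1`, so the `(n-1)/2` pairs add up to `(n²-1)/2`, and
`2 · ((n²-1)/2) / √(n²-1) = √(n²-1)`.
-/

theorem Real.sqrt_div_sub_one_mul_div_add_one {N x : ℝ} (hN : 1 < N) (hx : 0 ≤ x) :
    √(x / (N - 1) * (x / (N + 1))) = x / √(N ^ 2 - 1) := by
  have hprod : x / (N - 1) * (x / (N + 1)) = x ^ 2 / (N ^ 2 - 1) := by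
    rw [div_mul_div_comm, ← sq, show (N - 1) * (N + 1) = N ^ 2 - 1 by ring]
  rw [hprod, Real.sqrt_div' _ (by nlinarith), Real.sqrt_sq hx]

theorem sum_Icc_ite_odd_sub (c : ℝ) (k : ℕ) :
    ∑ i ∈ Icc 1 (2 * k), (if Odd i then c - i else (i : ℝ)) = k * (c + 1) := by
  induction k with
  | zero => simp
  | succ k ih =>
    rw [show 2 * (k + 1) = 2 * k + 1 + 1 by ring, sum_Icc_succ_top (by omega),
      sum_Icc_succ_top (by omega), ih, if_pos (odd_two_mul_add_one k),
      if_neg (Nat.not_odd_iff_even.2 (odd_two_mul_add_one k).add_one)]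
    push_cast
    ring

theorem sum_Icc_ite_odd_sub_of_odd {n : ℕ} (hn : Odd n) :
    ∑ i ∈ Icc 1 (n - 1), (if Odd i then (n : ℝ) - i else (i : ℝ)) = ((n : ℝ) ^ 2 - 1) / 2 := by
  obtain ⟨k, rfl⟩ := hn
  rw [Nat.add_sub_cancel, sum_Icc_ite_odd_sub]
  push_cast
  ring

/-- For the path `P_n` with `n` odd and the weights
`p_i^{i+1} = (n-i)/(n-1)` for odd `i`, `i/(n+1)` for even `i`, and
`p_i^{i-1} = (i-1)/(n-1)` for odd `i`, `(n+1-i)/(n+1)` for even `i`,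
the weighted edge sum satisfies `2 ∑_{i=1}^{n-1} √(p_i^{i+1} p_{i+1}^i) = √(n²-1)`. -/
theorem stmt15 {n : ℕ} (hn : Odd n) (p : ℕ → ℕ → ℝ)
    (hnext : ∀ i, 1 ≤ i → i ≤ n - 1 →
      p i (i + 1) = if Odd i then ((n : ℝ) - i) / ((n : ℝ) - 1)
        else (i : ℝ) / ((n : ℝ) + 1))
    (hprev : ∀ i, 2 ≤ i → i ≤ n →
      p i (i - 1) = if Odd i then ((i : ℝ) - 1) / ((n : ℝ) - 1)
        else ((n : ℝ) + 1 - i) / ((n : ℝ) + 1)) :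
    2 * ∑ i ∈ Finset.Icc 1 (n - 1), Real.sqrt (p i (i + 1) * p (i + 1) i)
      = Real.sqrt ((n : ℝ) ^ 2 - 1) := by
  have hterm : ∀ i ∈ Icc 1 (n - 1), √(p i (i + 1) * p (i + 1) i) =
      (if Odd i then (n : ℝ) - i else (i : ℝ)) / √((n : ℝ) ^ 2 - 1) := by
    intro i hi
    rw [mem_Icc] at hi
    have hN : (1 : ℝ) < n := by exact_mod_cast (show 1 < n by omega)
    have hin : (i : ℝ) ≤ n := by exact_mod_cast (show i ≤ n by omega)
    have hback := hprev (i + 1) (by omega) (by omega)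
    rw [Nat.add_sub_cancel] at hback
    rw [hnext i hi.1 hi.2, hback]
    by_cases hi_odd : Odd i
    · rw [if_pos hi_odd, if_neg (Nat.not_odd_iff_even.2 hi_odd.add_one), if_pos hi_odd]
      push_cast
      rw [show (n : ℝ) + 1 - (i + 1) = n - i by ring]
      exact Real.sqrt_div_sub_one_mul_div_add_one hN (by linarith)
    · rw [if_neg hi_odd, if_pos (Nat.not_odd_iff_even.1 hi_odd).add_one, if_neg hi_odd]
      push_cast
      rw [add_sub_cancel_right, mul_comm]
      exact Real.sqrt_div_sub_one_mul_div_add_one hN (by positivity)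
  rw [sum_congr rfl hterm, ← sum_div, sum_Icc_ite_odd_sub_of_odd hn,
    show ∀ x : ℝ, 2 * (x / 2 / √x) = x / √x by intro x; ring, Real.div_sqrt]
end

section
/- Let D_n be the dandelion graph on 3n+1 vertices (n ≥ 2). Then E(D_n) ≥ 2√(2n² + n). -/
open Finset Matrix

/-- The defining relation of the dandelion graph `D_n`: vertex `0` is joined to the
hub vertices `1,…,n`, and each hub `i ∈ {1,…,n}` is joined to the two leaves
`i + n` and `i + 2n`. -/
def dandelionRel (n : ℕ) (a b : Fin (3 * n + 1)) : Prop :=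
  ((a : ℕ) = 0 ∧ 1 ≤ (b : ℕ) ∧ (b : ℕ) ≤ n) ∨
  (1 ≤ (a : ℕ) ∧ (a : ℕ) ≤ n ∧ ((b : ℕ) = (a : ℕ) + n ∨ (b : ℕ) = (a : ℕ) + 2 * n))

instance {n : ℕ} : DecidableRel (dandelionRel n) := fun a b => by
  unfold dandelionRel; infer_instance

/-- The dandelion graph `D_n` on `3n+1` vertices. -/
def dandelion (n : ℕ) : SimpleGraph (Fin (3 * n + 1)) :=
  SimpleGraph.fromRel (dandelionRel n)

instance {n : ℕ} : DecidableRel (dandelion n).Adj := fun a b =>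
  decidable_of_iff _ (SimpleGraph.fromRel_adj (dandelionRel n) a b).symm

/-! ### Auxiliary material -/

lemma trace_le_sum_abs_eig {m : Type*} [Fintype m] [DecidableEq m]
    (A B : Matrix m m ℝ) (hA : A.IsHermitian)
    (hB : ∀ x : m → ℝ, |x ⬝ᵥ (B *ᵥ x)| ≤ x ⬝ᵥ x) :
    (A * B).trace ≤ ∑ k, |hA.eigenvalues k| := by
  classical
  set U : Matrix m m ℝ := (hA.eigenvectorUnitary : Matrix m m ℝ) with hUdef
  have hU1 : star U * U = 1 := Unitary.coe_star_mul_self hA.eigenvectorUnitary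
  have hspec : A = U * Matrix.diagonal hA.eigenvalues * star U := by
    have := hA.spectral_theorem
    simpa [RCLike.ofReal_real_eq_id] using this
  have hcol : ∀ i, (fun j => U j i) ⬝ᵥ (fun j => U j i) = 1 := by
    intro i
    have : (star U * U) i i = (1 : Matrix m m ℝ) i i := by rw [hU1]
    simpa [Matrix.mul_apply, Matrix.star_apply, dotProduct, Matrix.one_apply] using this
  have hentry : ∀ i, (star U * B * U) i i = (fun j => U j i) ⬝ᵥ (B *ᵥ (fun j => U j i)) := by
    intro i
    simp only [Matrix.mul_apply, Matrix.star_apply, dotProduct, mulVec, star_trivial]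
    simp only [Finset.sum_mul, Finset.mul_sum]
    rw [Finset.sum_comm]
    exact Finset.sum_congr rfl fun x _ => Finset.sum_congr rfl fun y _ => by ring
  have htr : (A * B).trace = ∑ i, hA.eigenvalues i * (star U * B * U) i i := by
    have e1 : A * B = U * ((Matrix.diagonal hA.eigenvalues * star U) * B) := by
      conv_lhs => rw [hspec]
      simp [Matrix.mul_assoc]
    rw [e1, Matrix.trace_mul_comm]
    have e2 : Matrix.diagonal hA.eigenvalues * star U * B * U
        = Matrix.diagonal hA.eigenvalues * (star U * B * U) := by simp [Matrix.mul_assoc]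
    rw [show Matrix.diagonal hA.eigenvalues * star U * B * U
        = Matrix.diagonal hA.eigenvalues * (star U * B * U) from e2]
    simp [Matrix.trace, Matrix.diagonal_mul, Matrix.diag]
  rw [htr]
  apply Finset.sum_le_sum
  intro i _
  have h1 : |(star U * B * U) i i| ≤ 1 := by
    rw [hentry i]
    calc |(fun j => U j i) ⬝ᵥ (B *ᵥ (fun j => U j i))| ≤ (fun j => U j i) ⬝ᵥ (fun j => U j i) := hB _
    _ = 1 := hcol i
  calc hA.eigenvalues i * (star U * B * U) i i ≤ |hA.eigenvalues i * (star U * B * U) i i| := le_abs_self _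
  _ = |hA.eigenvalues i| * |(star U * B * U) i i| := abs_mul _ _
  _ ≤ |hA.eigenvalues i| * 1 := by exact mul_le_mul_of_nonneg_left h1 (abs_nonneg _)
  _ = _ := mul_one _

lemma dandelion_adj {n : ℕ} (a b : Fin (3*n+1)) :
    (dandelion n).Adj a b ↔ dandelionRel n a b ∨ dandelionRel n b a := by
  rw [dandelion, SimpleGraph.fromRel_adj]
  constructor
  · rintro ⟨-, h⟩; exact h
  · intro h
    refine ⟨fun hab => ?_, h⟩
    have : (a : ℕ) = (b : ℕ) := congrArg Fin.val hab
    rcases h with h | h <;> rcases h with ⟨h1, h2, h3⟩ | ⟨h1, h2, h3 | h3⟩ <;> omega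

def vz (n : ℕ) : Fin (3*n+1) := ⟨0, by omega⟩
def vh (n : ℕ) (i : Fin n) : Fin (3*n+1) := ⟨1+i, by omega⟩
def vla (n : ℕ) (i : Fin n) : Fin (3*n+1) := ⟨1+n+i, by omega⟩
def vlb (n : ℕ) (i : Fin n) : Fin (3*n+1) := ⟨1+n+n+i, by omega⟩

@[simp] lemma vz_val {n : ℕ} : (vz n : ℕ) = 0 := rfl
@[simp] lemma vh_val {n : ℕ} (i : Fin n) : (vh n i : ℕ) = 1+i := rfl
@[simp] lemma vla_val {n : ℕ} (i : Fin n) : (vla n i : ℕ) = 1+n+i := rfl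
@[simp] lemma vlb_val {n : ℕ} (i : Fin n) : (vlb n i : ℕ) = 1+n+n+i := rfl

def dandEquiv (n : ℕ) : (Fin 1 ⊕ (Fin n ⊕ (Fin n ⊕ Fin n))) ≃ Fin (3*n+1) :=
  (((Equiv.refl (Fin 1)).sumCongr ((Equiv.refl (Fin n)).sumCongr finSumFinEquiv)).trans <|
  ((Equiv.refl (Fin 1)).sumCongr finSumFinEquiv).trans <|
  finSumFinEquiv).trans (finCongr (by omega))

lemma dE1 {n : ℕ} : dandEquiv n (Sum.inl 0) = vz n := by
  ext; simp [dandEquiv, vz]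

lemma dE2 {n : ℕ} (i : Fin n) : dandEquiv n (Sum.inr (Sum.inl i)) = vh n i := by
  ext; simp [dandEquiv, vh]

lemma dE3 {n : ℕ} (i : Fin n) : dandEquiv n (Sum.inr (Sum.inr (Sum.inl i))) = vla n i := by
  ext; simp [dandEquiv, vla]; omega

lemma dE4 {n : ℕ} (i : Fin n) : dandEquiv n (Sum.inr (Sum.inr (Sum.inr i))) = vlb n i := by
  ext; simp [dandEquiv, vlb]; omega

lemma sum_split {n : ℕ} (f : Fin (3*n+1) → ℝ) :
    ∑ v, f v = f (vz n) + (∑ i, f (vh n i) + (∑ i, f (vla n i) + ∑ i, f (vlb n i))) := by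
  rw [← (dandEquiv n).sum_comp f]
  rw [Fintype.sum_sum_type, Fintype.sum_sum_type, Fintype.sum_sum_type]
  simp only [dE1, dE2, dE3, dE4, Fin.sum_univ_one]

/-- The auxiliary weight matrix. -/
def Bmat (n : ℕ) (t : ℝ) : Matrix (Fin (3*n+1)) (Fin (3*n+1)) ℝ :=
  fun v w => if (dandelion n).Adj v w then (if (v:ℕ) = 0 ∨ (w:ℕ) = 0 then t else n*t) else 0

section Bvals

variable {n : ℕ} {t : ℝ}

lemma B_zz : Bmat n t (vz n) (vz n) = 0 := by
  have h : ¬ (dandelion n).Adj (vz n) (vz n) := by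
    rw [dandelion_adj]; unfold dandelionRel; simp only [vz_val, true_and, and_true]; omega
  simp [Bmat, h]

lemma B_z_h (i : Fin n) : Bmat n t (vz n) (vh n i) = t := by
  have hi := i.isLt
  have h : (dandelion n).Adj (vz n) (vh n i) := by
    rw [dandelion_adj]; unfold dandelionRel; simp only [vz_val, vh_val, true_and, and_true]; omega
  simp [Bmat, h]

lemma B_h_z (i : Fin n) : Bmat n t (vh n i) (vz n) = t := by
  have hi := i.isLt
  have h : (dandelion n).Adj (vh n i) (vz n) := by
    rw [dandelion_adj]; unfold dandelionRel; simp only [vz_val, vh_val, true_and, and_true]; omega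
  simp [Bmat, h]

lemma B_z_la (i : Fin n) : Bmat n t (vz n) (vla n i) = 0 := by
  have hi := i.isLt
  have h : ¬ (dandelion n).Adj (vz n) (vla n i) := by
    rw [dandelion_adj]; unfold dandelionRel; simp only [vz_val, vla_val, true_and, and_true]; omega
  simp [Bmat, h]

lemma B_z_lb (i : Fin n) : Bmat n t (vz n) (vlb n i) = 0 := by
  have hi := i.isLt
  have h : ¬ (dandelion n).Adj (vz n) (vlb n i) := by
    rw [dandelion_adj]; unfold dandelionRel; simp only [vz_val, vlb_val, true_and, and_true]; omega
  simp [Bmat, h]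

lemma B_la_z (i : Fin n) : Bmat n t (vla n i) (vz n) = 0 := by
  have hi := i.isLt
  have h : ¬ (dandelion n).Adj (vla n i) (vz n) := by
    rw [dandelion_adj]; unfold dandelionRel; simp only [vz_val, vla_val, true_and, and_true]; omega
  simp [Bmat, h]

lemma B_lb_z (i : Fin n) : Bmat n t (vlb n i) (vz n) = 0 := by
  have hi := i.isLt
  have h : ¬ (dandelion n).Adj (vlb n i) (vz n) := by
    rw [dandelion_adj]; unfold dandelionRel; simp only [vz_val, vlb_val, true_and, and_true]; omega
  simp [Bmat, h]

lemma B_h_h (i j : Fin n) : Bmat n t (vh n i) (vh n j) = 0 := by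
  have hi := i.isLt; have hj := j.isLt
  have h : ¬ (dandelion n).Adj (vh n i) (vh n j) := by
    rw [dandelion_adj]; unfold dandelionRel; simp only [vh_val, true_and, and_true]; omega
  simp [Bmat, h]

lemma B_la_la (i j : Fin n) : Bmat n t (vla n i) (vla n j) = 0 := by
  have hi := i.isLt; have hj := j.isLt
  have h : ¬ (dandelion n).Adj (vla n i) (vla n j) := by
    rw [dandelion_adj]; unfold dandelionRel; simp only [vla_val, true_and, and_true]; omega
  simp [Bmat, h]

lemma B_lb_lb (i j : Fin n) : Bmat n t (vlb n i) (vlb n j) = 0 := by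
  have hi := i.isLt; have hj := j.isLt
  have h : ¬ (dandelion n).Adj (vlb n i) (vlb n j) := by
    rw [dandelion_adj]; unfold dandelionRel; simp only [vlb_val, true_and, and_true]; omega
  simp [Bmat, h]

lemma B_la_lb (i j : Fin n) : Bmat n t (vla n i) (vlb n j) = 0 := by
  have hi := i.isLt; have hj := j.isLt
  have h : ¬ (dandelion n).Adj (vla n i) (vlb n j) := by
    rw [dandelion_adj]; unfold dandelionRel; simp only [vla_val, vlb_val, true_and, and_true]; omega
  simp [Bmat, h]

lemma B_lb_la (i j : Fin n) : Bmat n t (vlb n i) (vla n j) = 0 := by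
  have hi := i.isLt; have hj := j.isLt
  have h : ¬ (dandelion n).Adj (vlb n i) (vla n j) := by
    rw [dandelion_adj]; unfold dandelionRel; simp only [vla_val, vlb_val, true_and, and_true]; omega
  simp [Bmat, h]

lemma B_h_la (i j : Fin n) : Bmat n t (vh n i) (vla n j) = if i = j then n*t else 0 := by
  have hi := i.isLt; have hj := j.isLt
  rcases eq_or_ne i j with rfl | hij
  · have h : (dandelion n).Adj (vh n i) (vla n i) := by
      rw [dandelion_adj]; unfold dandelionRel; simp only [vh_val, vla_val, true_and, and_true]; omega
    simp [Bmat, h]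
  · have hv : (i : ℕ) ≠ (j : ℕ) := fun hv => hij (Fin.ext hv)
    have h : ¬ (dandelion n).Adj (vh n i) (vla n j) := by
      rw [dandelion_adj]; unfold dandelionRel; simp only [vh_val, vla_val, true_and, and_true]; omega
    simp [Bmat, h, hij]

lemma B_la_h (i j : Fin n) : Bmat n t (vla n i) (vh n j) = if i = j then n*t else 0 := by
  have hi := i.isLt; have hj := j.isLt
  rcases eq_or_ne i j with rfl | hij
  · have h : (dandelion n).Adj (vla n i) (vh n i) := by
      rw [dandelion_adj]; unfold dandelionRel; simp only [vh_val, vla_val, true_and, and_true]; omega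
    simp [Bmat, h]
  · have hv : (i : ℕ) ≠ (j : ℕ) := fun hv => hij (Fin.ext hv)
    have h : ¬ (dandelion n).Adj (vla n i) (vh n j) := by
      rw [dandelion_adj]; unfold dandelionRel; simp only [vh_val, vla_val, true_and, and_true]; omega
    simp [Bmat, h, hij]

lemma B_h_lb (i j : Fin n) : Bmat n t (vh n i) (vlb n j) = if i = j then n*t else 0 := by
  have hi := i.isLt; have hj := j.isLt
  rcases eq_or_ne i j with rfl | hij
  · have h : (dandelion n).Adj (vh n i) (vlb n i) := by
      rw [dandelion_adj]; unfold dandelionRel; simp only [vh_val, vlb_val, true_and, and_true]; omega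
    simp [Bmat, h]
  · have hv : (i : ℕ) ≠ (j : ℕ) := fun hv => hij (Fin.ext hv)
    have h : ¬ (dandelion n).Adj (vh n i) (vlb n j) := by
      rw [dandelion_adj]; unfold dandelionRel; simp only [vh_val, vlb_val, true_and, and_true]; omega
    simp [Bmat, h, hij]

lemma B_lb_h (i j : Fin n) : Bmat n t (vlb n i) (vh n j) = if i = j then n*t else 0 := by
  have hi := i.isLt; have hj := j.isLt
  rcases eq_or_ne i j with rfl | hij
  · have h : (dandelion n).Adj (vlb n i) (vh n i) := by
      rw [dandelion_adj]; unfold dandelionRel; simp only [vh_val, vlb_val, true_and, and_true]; omega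
    simp [Bmat, h]
  · have hv : (i : ℕ) ≠ (j : ℕ) := fun hv => hij (Fin.ext hv)
    have h : ¬ (dandelion n).Adj (vlb n i) (vh n j) := by
      rw [dandelion_adj]; unfold dandelionRel; simp only [vh_val, vlb_val, true_and, and_true]; omega
    simp [Bmat, h, hij]

end Bvals

lemma bilin {n : ℕ} (t : ℝ) (x : Fin (3*n+1) → ℝ) :
    ∑ v, ∑ w, x v * Bmat n t v w * x w
      = ∑ i : Fin n, (2*t*(x (vz n))*(x (vh n i))
          + 2*((n:ℝ)*t)*(x (vh n i))*(x (vla n i) + x (vlb n i))) := by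
  rw [sum_split (f := fun v => ∑ w, x v * Bmat n t v w * x w)]
  have rowz : ∑ w, x (vz n) * Bmat n t (vz n) w * x w
      = ∑ j, x (vz n) * t * x (vh n j) := by
    rw [sum_split (f := fun w => x (vz n) * Bmat n t (vz n) w * x w)]
    simp [B_zz, B_z_h, B_z_la, B_z_lb]
  have rowh : ∀ i, ∑ w, x (vh n i) * Bmat n t (vh n i) w * x w
      = x (vh n i) * t * x (vz n)
        + (n:ℝ)*t * (x (vh n i)) * (x (vla n i) + x (vlb n i)) := by
    intro i
    rw [sum_split (f := fun w => x (vh n i) * Bmat n t (vh n i) w * x w)]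
    simp only [B_h_z, B_h_h, B_h_la, B_h_lb, mul_ite, ite_mul, mul_zero, zero_mul,
      Finset.sum_ite_eq, Finset.mem_univ, if_true, Finset.sum_const_zero]
    ring
  have rowla : ∀ i, ∑ w, x (vla n i) * Bmat n t (vla n i) w * x w
      = x (vla n i) * ((n:ℝ)*t) * x (vh n i) := by
    intro i
    rw [sum_split (f := fun w => x (vla n i) * Bmat n t (vla n i) w * x w)]
    simp only [B_la_z, B_la_h, B_la_la, B_la_lb, mul_ite, ite_mul, mul_zero, zero_mul,
      Finset.sum_ite_eq, Finset.mem_univ, if_true, Finset.sum_const_zero]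
    ring
  have rowlb : ∀ i, ∑ w, x (vlb n i) * Bmat n t (vlb n i) w * x w
      = x (vlb n i) * ((n:ℝ)*t) * x (vh n i) := by
    intro i
    rw [sum_split (f := fun w => x (vlb n i) * Bmat n t (vlb n i) w * x w)]
    simp only [B_lb_z, B_lb_h, B_lb_la, B_lb_lb, mul_ite, ite_mul, mul_zero, zero_mul,
      Finset.sum_ite_eq, Finset.mem_univ, if_true, Finset.sum_const_zero]
    ring
  rw [rowz]
  rw [Finset.sum_congr rfl (fun i _ => rowh i), Finset.sum_congr rfl (fun i _ => rowla i),
    Finset.sum_congr rfl (fun i _ => rowlb i)]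
  rw [← Finset.sum_add_distrib, ← Finset.sum_add_distrib, ← Finset.sum_add_distrib]
  exact Finset.sum_congr rfl fun i _ => by ring

/-- For `n ≥ 2`, the energy of the dandelion graph satisfies
`E(D_n) ≥ 2√(2n² + n)`. -/
theorem stmt17 {n : ℕ} (hn : 2 ≤ n) :
    2 * Real.sqrt (2 * (n : ℝ) ^ 2 + n) ≤ (dandelion n).energy := by
  have hn0 : (0:ℝ) < n := by exact_mod_cast (by omega : 0 < n)
  have hpos : (0:ℝ) < 2*(n:ℝ)^2 + n := by nlinarith
  set s : ℝ := Real.sqrt (2*(n:ℝ)^2 + n) with hsdef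
  have hs2 : s^2 = 2*(n:ℝ)^2 + n := Real.sq_sqrt hpos.le
  have hs0 : 0 < s := Real.sqrt_pos.2 hpos
  set t : ℝ := s⁻¹ with htdef
  have hts : t^2 * (2*(n:ℝ)^2+n) = 1 := by
    rw [htdef, ← hs2]
    field_simp
  -- the PSD-type bound for Bmat
  have hB : ∀ x : Fin (3*n+1) → ℝ, |x ⬝ᵥ (Bmat n t *ᵥ x)| ≤ x ⬝ᵥ x := by
    intro x
    set xz := x (vz n) with hxz
    have hxB : x ⬝ᵥ (Bmat n t *ᵥ x) = ∑ i : Fin n, (2*t*xz*(x (vh n i))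
          + 2*((n:ℝ)*t)*(x (vh n i))*(x (vla n i) + x (vlb n i))) := by
      rw [← bilin]
      simp only [dotProduct, mulVec]
      exact Finset.sum_congr rfl fun v _ => by
        rw [Finset.mul_sum]
        exact Finset.sum_congr rfl fun w _ => by ring
    have hxx : x ⬝ᵥ x = xz^2
        + ∑ i : Fin n, ((x (vh n i))^2 + (x (vla n i))^2 + (x (vlb n i))^2) := by
      rw [dotProduct, sum_split (f := fun v => x v * x v)]
      congr 1
      · ring
      rw [← Finset.sum_add_distrib, ← Finset.sum_add_distrib]
      exact Finset.sum_congr rfl fun i _ => by ring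
    rw [hxB, hxx]
    set P : Fin n → ℝ := fun i => 2*t*xz*(x (vh n i))
          + 2*((n:ℝ)*t)*(x (vh n i))*(x (vla n i) + x (vlb n i)) with hP
    set R : Fin n → ℝ := fun i => (x (vh n i))^2 + (x (vla n i))^2 + (x (vlb n i))^2 with hR
    have key1 : ∀ i : Fin n, (n:ℝ) * P i ≤ xz^2 + (n:ℝ) * R i := by
      intro i
      set a := x (vh n i); set b := x (vla n i); set c := x (vlb n i)
      have hid : xz^2 + (n:ℝ)*R i - (n:ℝ)*P i
          = (xz - (n:ℝ)*t*a)^2 + (n:ℝ)*(b - (n:ℝ)*t*a)^2 + (n:ℝ)*(c - (n:ℝ)*t*a)^2 := by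
        simp only [hP, hR]
        linear_combination (-(n:ℝ)*a^2) * hts
      nlinarith [sq_nonneg (xz - (n:ℝ)*t*a), mul_nonneg hn0.le (sq_nonneg (b - (n:ℝ)*t*a)),
        mul_nonneg hn0.le (sq_nonneg (c - (n:ℝ)*t*a))]
    have key2 : ∀ i : Fin n, -(xz^2 + (n:ℝ) * R i) ≤ (n:ℝ) * P i := by
      intro i
      set a := x (vh n i); set b := x (vla n i); set c := x (vlb n i)
      have hid : xz^2 + (n:ℝ)*R i + (n:ℝ)*P i
          = (xz + (n:ℝ)*t*a)^2 + (n:ℝ)*(b + (n:ℝ)*t*a)^2 + (n:ℝ)*(c + (n:ℝ)*t*a)^2 := by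
        simp only [hP, hR]
        linear_combination (-(n:ℝ)*a^2) * hts
      nlinarith [sq_nonneg (xz + (n:ℝ)*t*a), mul_nonneg hn0.le (sq_nonneg (b + (n:ℝ)*t*a)),
        mul_nonneg hn0.le (sq_nonneg (c + (n:ℝ)*t*a))]
    rw [abs_le]
    have hcard : ∑ _i : Fin n, xz^2 = (n:ℝ) * xz^2 := by
      rw [Finset.sum_const, Finset.card_univ, Fintype.card_fin, nsmul_eq_mul]
    have e1 : ∑ i, ((n:ℝ)*P i) = (n:ℝ) * ∑ i, P i := (Finset.mul_sum _ _ _).symm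
    have e2 : ∑ i, (xz^2 + (n:ℝ)*R i) = (n:ℝ) * (xz^2 + ∑ i, R i) := by
      rw [Finset.sum_add_distrib, hcard, mul_add, Finset.mul_sum]
    have hsum1 : (n:ℝ) * ∑ i, P i ≤ (n:ℝ) * (xz^2 + ∑ i, R i) := by
      rw [← e1, ← e2]; exact Finset.sum_le_sum fun i _ => key1 i
    have hsum2 : -((n:ℝ) * (xz^2 + ∑ i, R i)) ≤ (n:ℝ) * ∑ i, P i := by
      rw [← e1, ← e2, ← Finset.sum_neg_distrib]
      exact Finset.sum_le_sum fun i _ => key2 i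
    constructor
    · nlinarith [hsum2, hn0]
    · nlinarith [hsum1, hn0]
  -- the trace of A * B
  have htrace : (((dandelion n).adjMatrix ℝ) * Bmat n t).trace = 2 * s := by
    have h1 : (((dandelion n).adjMatrix ℝ) * Bmat n t).trace
        = ∑ v, ∑ w, (1:ℝ) * Bmat n t v w * 1 := by
      rw [Matrix.trace]
      simp only [Matrix.diag, Matrix.mul_apply]
      refine Finset.sum_congr rfl fun v _ => Finset.sum_congr rfl fun w _ => ?_
      by_cases hadj : (dandelion n).Adj v w
      · have hadj' : (dandelion n).Adj w v := hadj.symm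
        simp only [SimpleGraph.adjMatrix_apply, Bmat, if_pos hadj, if_pos hadj',
          show ((w:ℕ)=0 ∨ (v:ℕ)=0) = ((v:ℕ)=0 ∨ (w:ℕ)=0) from propext or_comm]
        ring
      · have hadj' : ¬ (dandelion n).Adj w v := fun h => hadj h.symm
        simp [SimpleGraph.adjMatrix_apply, Bmat, hadj, hadj']
    rw [h1, bilin (n := n) t (fun _ => (1:ℝ))]
    have hone : ∀ i : Fin n, 2*t*((fun (_ : Fin (3*n+1)) => (1:ℝ)) (vz n))*((fun (_ : Fin (3*n+1)) => (1:ℝ)) (vh n i))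
          + 2*((n:ℝ)*t)*((fun (_ : Fin (3*n+1)) => (1:ℝ)) (vh n i))*(((fun (_ : Fin (3*n+1)) => (1:ℝ)) (vla n i)) + ((fun (_ : Fin (3*n+1)) => (1:ℝ)) (vlb n i)))
          = 2*t + 4*((n:ℝ)*t) := fun i => by norm_num; ring
    rw [Finset.sum_congr rfl fun i _ => hone i, Finset.sum_const, Finset.card_univ,
      Fintype.card_fin, nsmul_eq_mul, htdef]
    have hsne : s ≠ 0 := ne_of_gt hs0
    field_simp
    linear_combination (-2)*hs2
  have hmain := trace_le_sum_abs_eig ((dandelion n).adjMatrix ℝ) (Bmat n t)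
    (SimpleGraph.isHermitian_adjMatrix' _) hB
  rw [htrace] at hmain
  rw [SimpleGraph.energy]
  exact hmain
end

section
/- Let G be a simple connected graph such that E(i)·E(j) = 1 for every edge (i,j), where E(i) is the vertex energy. Then the adjacency matrix of G has rank 2 and consequently G is a complete bipartite graph. -/
/-!
As `B ≥ 0` and `B² = A²`, `B = |A|`, so `B - A` and `B + A` are positive semidefinite. For an
edge `ij` put `c = B j j`: the quadratic forms of `B - A` at `c eᵢ + eⱼ` and of `B + A` at
`-c eᵢ + eⱼ` are nonnegative and sum to `2c (B i i B j j - 1) = 0`, so both vectors lie in the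
respective kernels, and subtracting the two kernel equations gives `A_{kj} = c B_{ki}` for all `k`.
Consequently two neighbours `u, v` of a vertex `w` have `A`-columns `B u u • Bᵀ w` and
`B v v • Bᵀ w` with `B u u B w w = 1 = B v v B w w`, i.e. the same neighbourhood. Walking along
a connected graph from an edge `pq`, every neighbourhood is then `N(p)` or `N(q)`: the graph is
complete bipartite and `A` has exactly two distinct, independent rows.
-/

open Finset Matrix

namespace CFC

variable {A : Type*} [NonUnitalRing A] [StarRing A] [TopologicalSpace A]
  [Module ℝ A] [SMulCommClass ℝ A A] [IsScalarTower ℝ A A]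
  [NonUnitalContinuousFunctionalCalculus ℝ A IsSelfAdjoint]
  [PartialOrder A] [StarOrderedRing A] [NonnegSpectrumClass ℝ A]
  [IsTopologicalRing A] [T2Space A]

theorem eq_abs_of_mul_self_eq {a b : A} (ha : IsSelfAdjoint a) (hb : 0 ≤ b)
    (h : b * b = a * a) : b = abs a :=
  (mul_self_eq_mul_self_iff b (abs a)).mp (by rw [h, abs_mul_abs, ha.star_eq])

theorem sub_nonneg_and_add_nonneg_of_mul_self_eq {a b : A} (ha : IsSelfAdjoint a) (hb : 0 ≤ b)
    (h : b * b = a * a) : 0 ≤ b - a ∧ 0 ≤ b + a := by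
  rw [eq_abs_of_mul_self_eq ha hb h, abs_sub_self a ha, abs_add_self a ha]
  exact ⟨nsmul_nonneg (negPart_nonneg a) 2, nsmul_nonneg (posPart_nonneg a) 2⟩

end CFC

namespace Matrix

variable {n : Type*} [Fintype n]

open scoped ComplexOrder MatrixOrder in
theorem posSemidef_sub_and_add_of_mul_self_eq {𝕜 : Type*} [RCLike 𝕜] {A B : Matrix n n 𝕜}
    (hA : A.IsHermitian) (hB : B.PosSemidef) (h : B * B = A * A) :
    (B - A).PosSemidef ∧ (B + A).PosSemidef := by
  classical
  simpa only [nonneg_iff_posSemidef] using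
    CFC.sub_nonneg_and_add_nonneg_of_mul_self_eq hA.isSelfAdjoint hB.nonneg h

theorem mulVec_single_add_single_apply [DecidableEq n] {R : Type*} [NonUnitalNonAssocSemiring R]
    (M : Matrix n n R) (i j k : n) (a b : R) :
    (M *ᵥ (Pi.single i a + Pi.single j b)) k = M k i * a + M k j * b := by
  simp [mulVec_add, mulVec_single]

theorem single_add_single_dotProduct_mulVec [DecidableEq n] {R : Type*} [CommSemiring R]
    (M : Matrix n n R) (i j : n) (a b : R) :
    (Pi.single i a + Pi.single j b) ⬝ᵥ M *ᵥ (Pi.single i a + Pi.single j b) =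
      a * a * M i i + a * b * (M i j + M j i) + b * b * M j j := by
  simp only [add_dotProduct, single_dotProduct, mulVec_single_add_single_apply]
  ring

theorem col_eq_smul_col_of_posSemidef_sub_of_posSemidef_add {A B : Matrix n n ℝ}
    (hsub : (B - A).PosSemidef) (hadd : (B + A).PosSemidef) {i j : n}
    (hA : A i j + A j i = 2) (hB : B i i * B j j = 1) : Aᵀ j = B j j • Bᵀ i := by
  classical
  set c := B j j
  set x : n → ℝ := Pi.single i c + Pi.single j 1
  set y : n → ℝ := Pi.single i (-c) + Pi.single j 1
  have hx := hsub.dotProduct_mulVec_nonneg x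
  have hy := hadd.dotProduct_mulVec_nonneg y
  rw [star_trivial] at hx hy
  have hsum : x ⬝ᵥ (B - A) *ᵥ x + y ⬝ᵥ (B + A) *ᵥ y = 0 := by
    simp only [x, y, single_add_single_dotProduct_mulVec, sub_apply, add_apply]
    linear_combination (2 * c) * hB - (2 * c) * hA
  have hx0 : (B - A) *ᵥ x = 0 :=
    (hsub.dotProduct_mulVec_zero_iff x).mp (by rw [star_trivial]; linarith)
  have hy0 : (B + A) *ᵥ y = 0 :=
    (hadd.dotProduct_mulVec_zero_iff y).mp (by rw [star_trivial]; linarith)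
  ext k
  have hxk := congrFun hx0 k
  have hyk := congrFun hy0 k
  simp only [x, y, mulVec_single_add_single_apply, sub_apply, add_apply, Pi.zero_apply] at hxk hyk
  simp only [transpose_apply, Pi.smul_apply, smul_eq_mul]
  linear_combination (hyk - hxk) / 2

end Matrix

namespace SimpleGraph

variable {V : Type*} {G : SimpleGraph V}

theorem adjMatrix_row_eq_iff [DecidableRel G.Adj] {R : Type*} [MulZeroOneClass R] [Nontrivial R]
    {u v : V} : G.adjMatrix R u = G.adjMatrix R v ↔ G.neighborSet u = G.neighborSet v := by
  simp only [funext_iff, Set.ext_iff, adjMatrix_apply, mem_neighborSet]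
  refine forall_congr' fun k => ?_
  by_cases hu : G.Adj u k <;> by_cases hv : G.Adj v k <;> simp [hu, hv]

theorem neighborSet_eq_of_adj_of_adj_of_col_eq [DecidableRel G.Adj] {K : Type*} [Field K]
    {B : Matrix V V K} (hcol : ∀ ⦃i j⦄, G.Adj i j → (G.adjMatrix K)ᵀ j = B j j • Bᵀ i)
    ⦃u v w : V⦄ (hu : G.Adj w u) (hv : G.Adj w v) : G.neighborSet u = G.neighborSet v := by
  have hBu : 1 = B u u * B w w := by simpa [hu] using congrFun (hcol hu) w
  have hBv : 1 = B v v * B w w := by simpa [hv] using congrFun (hcol hv) w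
  have hBw : B w w ≠ 0 := right_ne_zero_of_mul (hBu.symm.trans_ne one_ne_zero)
  have hBuv : B u u = B v v := mul_right_cancel₀ hBw (hBu.symm.trans hBv)
  rw [← adjMatrix_row_eq_iff (R := K), ← G.transpose_adjMatrix, hcol hu, hcol hv, hBuv]

namespace Connected

variable {p q : V}

theorem neighborSet_eq_or_eq (hG : G.Connected)
    (htwin : ∀ ⦃u v w⦄, G.Adj w u → G.Adj w v → G.neighborSet u = G.neighborSet v)
    (hpq : G.Adj p q) (u : V) :
    G.neighborSet u = G.neighborSet p ∨ G.neighborSet u = G.neighborSet q := by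
  induction (reachable_iff_reflTransGen p u).mp (hG.preconnected p u) with
  | refl => exact Or.inl rfl
  | @tail b c _ hbc ih =>
    rcases ih with h | h
    · have hpc : G.Adj p c := by rw [← mem_neighborSet, ← h]; exact hbc
      exact Or.inr (htwin hpc hpq)
    · have hqc : G.Adj q c := by rw [← mem_neighborSet, ← h]; exact hbc
      exact Or.inl (htwin hqc hpq.symm)

theorem adj_iff_not_adj (hG : G.Connected)
    (htwin : ∀ ⦃u v w⦄, G.Adj w u → G.Adj w v → G.neighborSet u = G.neighborSet v)
    (hpq : G.Adj p q) (v : V) : G.Adj p v ↔ ¬G.Adj q v := by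
  refine ⟨fun hpv hqv => ?_, fun hqv => ?_⟩
  · have hp : q ∈ G.neighborSet p := hpq
    rw [htwin hpv.symm hqv.symm] at hp
    exact G.irrefl hp
  · rcases hG.neighborSet_eq_or_eq htwin hpq v with h | h
    · have hq : q ∈ G.neighborSet p := hpq
      rw [← h] at hq
      exact absurd hq.symm hqv
    · have hp : p ∈ G.neighborSet q := hpq.symm
      rw [← h] at hp
      exact hp.symm

theorem exists_adj_iff (hG : G.Connected)
    (htwin : ∀ ⦃u v w⦄, G.Adj w u → G.Adj w v → G.neighborSet u = G.neighborSet v)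
    (hpq : G.Adj p q) :
    ∃ s : Set V, ∀ u v, G.Adj u v ↔ ((u ∈ s ∧ v ∉ s) ∨ (u ∉ s ∧ v ∈ s)) := by
  refine ⟨G.neighborSet q, fun u v => ?_⟩
  rcases hG.neighborSet_eq_or_eq htwin hpq u with h | h
  · have hu : u ∈ G.neighborSet q := by
      have hq : q ∈ G.neighborSet p := hpq
      rw [← h] at hq
      exact hq.symm
    rw [← mem_neighborSet, h, mem_neighborSet, hG.adj_iff_not_adj htwin hpq]
    simp [hu]
  · have hu : u ∉ G.neighborSet q := fun hu => by
      rw [h.symm] at hu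
      exact G.irrefl hu
    rw [← mem_neighborSet, h, mem_neighborSet]
    simp [hu]

theorem rank_adjMatrix_eq_two [Fintype V] [DecidableRel G.Adj] {K : Type*} [Field K]
    (hG : G.Connected)
    (htwin : ∀ ⦃u v w⦄, G.Adj w u → G.Adj w v → G.neighborSet u = G.neighborSet v)
    (hpq : G.Adj p q) : (G.adjMatrix K).rank = 2 := by
  have hrange : Set.range (G.adjMatrix K).row = {G.adjMatrix K p, G.adjMatrix K q} := by
    ext x
    refine ⟨?_, ?_⟩
    · rintro ⟨u, rfl⟩
      simpa only [row, Set.mem_insert_iff, Set.mem_singleton_iff, adjMatrix_row_eq_iff]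
        using hG.neighborSet_eq_or_eq htwin hpq u
    · rintro (rfl | rfl)
      exacts [⟨p, rfl⟩, ⟨q, rfl⟩]
  have hli : LinearIndependent K ![G.adjMatrix K p, G.adjMatrix K q] := by
    rw [LinearIndependent.pair_iff]
    intro s t hst
    simpa [hpq, hpq.symm] using And.intro (congrFun hst q) (congrFun hst p)
  rw [Matrix.rank_eq_finrank_span_row, hrange, ← Matrix.range_cons_cons_empty _ _ ![],
    finrank_span_eq_card hli, Fintype.card_fin]

end Connected

end SimpleGraph

theorem stmt18_general {V : Type*} [Fintype V]
    (G : SimpleGraph V) [DecidableRel G.Adj]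
    (hG : G.Connected) (hedge : ∃ i j, G.Adj i j)
    (B : Matrix V V ℝ) (hB : B.PosSemidef)
    (hB2 : B * B = G.adjMatrix ℝ * G.adjMatrix ℝ)
    (heq : ∀ i j, G.Adj i j → B i i * B j j = 1) :
    (G.adjMatrix ℝ).rank = 2 ∧
      ∃ s : Set V, ∀ u v, G.Adj u v ↔ ((u ∈ s ∧ v ∉ s) ∨ (u ∉ s ∧ v ∈ s)) := by
  obtain ⟨p, q, hpq⟩ := hedge
  obtain ⟨hsub, hadd⟩ :=
    posSemidef_sub_and_add_of_mul_self_eq (G.isHermitian_adjMatrix ℝ) hB hB2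
  have hcol : ∀ ⦃i j⦄, G.Adj i j → (G.adjMatrix ℝ)ᵀ j = B j j • Bᵀ i := fun i j hij =>
    col_eq_smul_col_of_posSemidef_sub_of_posSemidef_add hsub hadd
      (by simp [hij, hij.symm, one_add_one_eq_two]) (heq i j hij)
  have htwin := G.neighborSet_eq_of_adj_of_adj_of_col_eq hcol
  exact ⟨hG.rank_adjMatrix_eq_two htwin hpq, hG.exists_adj_iff htwin hpq⟩

/-- Let `G` be a connected graph with at least one edge, and let `E(i) = B i i` be the
vertex energies, where `B` is the positive semidefinite square root of `A²`. If
`E(i)·E(j) = 1` for every edge `(i,j)`, then the adjacency matrix has rank `2` and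
`G` is a complete bipartite graph. -/
theorem stmt18 {V : Type*} [Fintype V] [DecidableEq V]
    (G : SimpleGraph V) [DecidableRel G.Adj]
    (hG : G.Connected) (hedge : ∃ i j, G.Adj i j)
    (B : Matrix V V ℝ) (hB : B.PosSemidef)
    (hB2 : B * B = G.adjMatrix ℝ * G.adjMatrix ℝ)
    (heq : ∀ i j, G.Adj i j → B i i * B j j = 1) :
    (G.adjMatrix ℝ).rank = 2 ∧
      ∃ s : Set V, ∀ u v, G.Adj u v ↔ ((u ∈ s ∧ v ∉ s) ∨ (u ∉ s ∧ v ∈ s)) :=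
  stmt18_general G hG hedge B hB hB2 heq
end

section
/- Let G be a connected complete bipartite graph. Then E(i)·E(j) = 1 for every edge (i,j) of G, where E(i) is the vertex energy. -/
open Finset Matrix

instance {n m : ℕ} : DecidableRel (completeBipartiteGraph (Fin n) (Fin m)).Adj :=
  fun a b => by unfold completeBipartiteGraph; dsimp only; infer_instance

/-!
For `K_{n,m}` the square of the adjacency matrix is block diagonal with constant blocks
`m • J_n` and `n • J_m`, where `J` is the all-ones matrix. Since `J_n * J_n = n • J_n`, the
block-diagonal matrix with constant blocks `√(m/n) • J_n` and `√(n/m) • J_m` is a positive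
semidefinite square root of it, hence, by uniqueness of such roots, it is `B`. Across an edge
the two diagonal entries are `√(m/n)` and `√(n/m)`, whose product is `1`.
-/

open scoped MatrixOrder

namespace Matrix

variable {ι κ : Type*} [Fintype ι] [Fintype κ]

theorem PosSemidef.fromBlocks_zero {P : Matrix ι ι ℝ} {Q : Matrix κ κ ℝ}
    (hP : P.PosSemidef) (hQ : Q.PosSemidef) : (fromBlocks P 0 0 Q).PosSemidef := by
  rw [posSemidef_iff_dotProduct_mulVec] at hP hQ ⊢
  refine ⟨hP.1.fromBlocks (by simp) hQ.1, fun x => ?_⟩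
  rw [← Sum.elim_comp_inl_inr x, fromBlocks_mulVec, star_trivial, sumElim_dotProduct_sumElim]
  simpa [star_trivial] using add_nonneg (hP.2 (x ∘ Sum.inl)) (hQ.2 (x ∘ Sum.inr))

theorem posSemidef_of_const {c : ℝ} (hc : 0 ≤ c) : (of fun _ _ : ι => c).PosSemidef := by
  have : (of fun _ _ : ι => c) = vecMulVec (fun _ => √c) (star fun _ => √c) := by
    ext; simp [vecMulVec_apply, Real.mul_self_sqrt hc]
  exact this ▸ posSemidef_vecMulVec_self_star _

theorem of_const_mul_of_const {l o : Type*} (a b : ℝ) :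
    (of fun (_ : l) (_ : ι) => a) * (of fun (_ : ι) (_ : o) => b) =
      of fun _ _ => Fintype.card ι * a * b := by
  ext; simp [mul_apply, mul_assoc]

theorem of_sqrt_div_card_mul_self {a : ℝ} (ha : 0 ≤ a) :
    (of fun _ _ : ι => √(a / Fintype.card ι)) * (of fun _ _ => √(a / Fintype.card ι)) =
      of fun _ _ => a := by
  ext i
  have hcard : (0 : ℝ) < Fintype.card ι := Nat.cast_pos.mpr (Fintype.card_pos_iff.mpr ⟨i⟩)
  rw [of_const_mul_of_const, of_apply, of_apply, mul_assoc, Real.mul_self_sqrt (by positivity),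
    mul_div_cancel₀ _ hcard.ne']

end Matrix

namespace SimpleGraph

variable {ι κ : Type*}

theorem adjMatrix_completeBipartiteGraph [DecidableRel (completeBipartiteGraph ι κ).Adj] :
    (completeBipartiteGraph ι κ).adjMatrix ℝ =
      fromBlocks 0 (of fun _ _ => 1) (of fun _ _ => 1) 0 := by
  ext (_ | _) (_ | _) <;> simp [adjMatrix_apply]

variable [Fintype ι] [Fintype κ] [DecidableRel (completeBipartiteGraph ι κ).Adj]

theorem adjMatrix_completeBipartiteGraph_mul_self :
    (completeBipartiteGraph ι κ).adjMatrix ℝ * (completeBipartiteGraph ι κ).adjMatrix ℝ =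
      fromBlocks (of fun _ _ => (Fintype.card κ : ℝ)) 0 0
        (of fun _ _ => (Fintype.card ι : ℝ)) := by
  rw [adjMatrix_completeBipartiteGraph, fromBlocks_multiply]
  simp [of_const_mul_of_const]

theorem _root_.completeBipartiteGraph.eq_fromBlocks_of_posSemidef_of_mul_self_eq
    {B : Matrix (ι ⊕ κ) (ι ⊕ κ) ℝ} (hB : B.PosSemidef)
    (hB2 : B * B = (completeBipartiteGraph ι κ).adjMatrix ℝ *
      (completeBipartiteGraph ι κ).adjMatrix ℝ) :
    B = fromBlocks (of fun _ _ => √(Fintype.card κ / Fintype.card ι)) 0 0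
      (of fun _ _ => √(Fintype.card ι / Fintype.card κ)) := by
  classical
  refine (CFC.mul_self_eq_mul_self_iff B _ hB.nonneg
    ((posSemidef_of_const (Real.sqrt_nonneg _)).fromBlocks_zero
      (posSemidef_of_const (Real.sqrt_nonneg _))).nonneg).mp ?_
  rw [hB2, adjMatrix_completeBipartiteGraph_mul_self, fromBlocks_multiply]
  simp only [Matrix.mul_zero, Matrix.zero_mul, add_zero, zero_add,
    of_sqrt_div_card_mul_self (Nat.cast_nonneg _)]

end SimpleGraph

theorem stmt19_general {n m : ℕ}
    (B : Matrix (Fin n ⊕ Fin m) (Fin n ⊕ Fin m) ℝ) (hB : B.PosSemidef)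
    (hB2 : B * B = (completeBipartiteGraph (Fin n) (Fin m)).adjMatrix ℝ *
      (completeBipartiteGraph (Fin n) (Fin m)).adjMatrix ℝ)
    {i j : Fin n ⊕ Fin m} (hij : (completeBipartiteGraph (Fin n) (Fin m)).Adj i j) :
    B i i * B j j = 1 := by
  have sqrt_div_mul_sqrt_div {x y : ℝ} (hx : 0 < x) (hy : 0 < y) :
      √(x / y) * √(y / x) = 1 := by
    rw [← Real.sqrt_mul (by positivity), div_mul_div_comm, mul_comm x, div_self (by positivity),
      Real.sqrt_one]
  rw [completeBipartiteGraph.eq_fromBlocks_of_posSemidef_of_mul_self_eq hB hB2]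
  rcases i with a | a <;> rcases j with b | b
  case inl.inl | inr.inr => simp at hij
  all_goals simpa only [fromBlocks_apply₁₁, fromBlocks_apply₂₂, of_apply, Fintype.card_fin] using
    sqrt_div_mul_sqrt_div (Nat.cast_pos.mpr b.pos) (Nat.cast_pos.mpr a.pos)

/-- For the (connected) complete bipartite graph `K_{n,m}` (`n, m ≥ 1`), the vertex
energies `E(i) = B i i` — with `B` the positive semidefinite square root of the square
of the adjacency matrix — satisfy `E(i)·E(j) = 1` for every edge `(i,j)`. -/
theorem stmt19 {n m : ℕ} (hn : 1 ≤ n) (hm : 1 ≤ m)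
    (B : Matrix (Fin n ⊕ Fin m) (Fin n ⊕ Fin m) ℝ) (hB : B.PosSemidef)
    (hB2 : B * B = (completeBipartiteGraph (Fin n) (Fin m)).adjMatrix ℝ *
      (completeBipartiteGraph (Fin n) (Fin m)).adjMatrix ℝ)
    {i j : Fin n ⊕ Fin m} (hij : (completeBipartiteGraph (Fin n) (Fin m)).Adj i j) :
    B i i * B j j = 1 :=
  stmt19_general B hB hB2 hij
end
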